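/- arXiv:2602.15965 — 7 statements merged into one kernel-verified Lean document; each statement's English description precedes it below -/
import Mathlib

section
/- For a signed P3109 format f, if a and b are finite values of f with exponent(a) ≥ exponent(b), s is any faithful rounding of a+b in f, and |a+b| ≤ M_hi, then the real number s − a is exactly representable in f. -/
/-- Finite value set of a signed P3109 format with precision `P` and
exponent range `emin ≤ emax`. -/
def Vf (P : ℕ) (emin emax : ℤ) : Set ℝ :=
  { x | ∃ m e : ℤ, |m| < 2 ^ P ∧ emin ≤ e ∧ e ≤ emax ∧
      x = (m : ℝ) * (2 : ℝ) ^ (e - (P : ℤ) + 1) }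

/-- Largest finite magnitude. -/
noncomputable def Mhi (P : ℕ) (emax : ℤ) : ℝ :=
  ((2 : ℝ) ^ P - 1) * (2 : ℝ) ^ (emax - (P : ℤ) + 1)

/-- Canonical exponent: `max (⌊log₂ |x|⌋) emin` for `x ≠ 0`, `emin` for `x = 0`. -/
noncomputable def expo (emin : ℤ) (x : ℝ) : ℤ :=
  if x = 0 then emin else max (Int.log 2 |x|) emin

/-- `s` is a faithful rounding of `r` in `V`: it is `r` itself if `r ∈ V`,
and otherwise a floating-point neighbor (predecessor or successor) of `r`. -/
def Faithful (V : Set ℝ) (r s : ℝ) : Prop :=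
  s ∈ V ∧ (r ∈ V → s = r) ∧
    ((s ≤ r ∧ ∀ v ∈ V, v ≤ r → v ≤ s) ∨ (r ≤ s ∧ ∀ v ∈ V, r ≤ v → s ≤ v))

/-- `s` is a round-to-nearest value of `r` in `V` (arbitrary tie-breaking). -/
def Nearest (V : Set ℝ) (r s : ℝ) : Prop :=
  s ∈ V ∧ ∀ v ∈ V, |s - r| ≤ |v - r|

/-!
Values of the format with exponent `e` are integer multiples of `ulp P e = 2^(e-P+1)`; in
particular `a + b` is a multiple of `u = ulp P (expo b)`. If `|a + b| < 2^(expo b + 1)`, then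
`a + b` is representable and `s - a = b`. Otherwise `2^E ≤ |a + b| < 2^(E+1)` with
`expo b < E ≤ emax`: the representable grid points of `ulp P E ℤ` around `a + b`, and `±2^E`,
trap `s`, so `s` is a multiple of `ulp P E` and `|s - (a + b)| < ulp P E`, which on the grid `u ℤ`
means `|s - (a + b)| ≤ ulp P E - u`. Hence `|s - a| ≤ ulp P E + 2^(expo b + 1) - 2u`, small enough
for `s - a` to be representable with exponent `E` if `E ≤ expo a`, and with exponent
`expo a = E - 1` otherwise.
-/

open AddSubgroup

noncomputable def ulp (P : ℕ) (e : ℤ) : ℝ := 2 ^ (e - (P : ℤ) + 1)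

lemma le_of_two_zpow_le_of_lt_two_zpow_add_one {x : ℝ} {p q : ℤ} (hp : (2 : ℝ) ^ p ≤ x)
    (hq : x < 2 ^ (q + 1)) : p ≤ q :=
  Int.lt_add_one_iff.mp <| (zpow_lt_zpow_iff_right₀ one_lt_two).mp (hp.trans_lt hq)

section Multiples

lemma two_zpow_mem_zmultiples_two_zpow {p q : ℤ} (h : p ≤ q) :
    (2 : ℝ) ^ q ∈ zmultiples ((2 : ℝ) ^ p) := by
  refine mem_zmultiples_iff.mpr ⟨2 ^ (q - p).toNat, ?_⟩
  rw [zsmul_eq_mul, Int.cast_pow, Int.cast_ofNat, ← zpow_natCast, ← zpow_add₀ two_ne_zero]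
  congr 1
  omega

variable {u x y : ℝ}

lemma abs_le_sub_of_mem_zmultiples (hu : 0 < u) (hx : x ∈ zmultiples u)
    (hy : y ∈ zmultiples u) (h : |x| < y) : |x| ≤ y - u := by
  obtain ⟨k, rfl⟩ := mem_zmultiples_iff.mp hx
  obtain ⟨n, rfl⟩ := mem_zmultiples_iff.mp hy
  rw [zsmul_eq_mul, zsmul_eq_mul, abs_mul, abs_of_pos hu, ← Int.cast_abs] at h ⊢
  have hk : |k| ≤ n - 1 := Int.le_sub_one_of_lt (by exact_mod_cast lt_of_mul_lt_mul_right h hu.le)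
  have hk' : ((|k| : ℤ) : ℝ) ≤ n - 1 := by exact_mod_cast hk
  nlinarith

lemma abs_floor_div_mul_le (hu : 0 < u) (hy : y ∈ zmultiples u) (hx : |x| ≤ y) :
    |(⌊x / u⌋ : ℝ) * u| ≤ y := by
  obtain ⟨n, rfl⟩ := mem_zmultiples_iff.mp hy
  rw [zsmul_eq_mul] at hx ⊢
  obtain ⟨hlo, hhi⟩ := abs_le.mp hx
  have hfloor_lo : -n ≤ ⌊x / u⌋ := Int.le_floor.mpr (by push_cast; rw [le_div_iff₀ hu]; linarith)
  have hfloor_hi : (⌊x / u⌋ : ℝ) ≤ n :=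
    (Int.floor_le _).trans ((div_le_iff₀ hu).mpr hhi)
  rw [abs_mul, abs_of_pos hu]
  gcongr
  exact abs_le.mpr ⟨by exact_mod_cast hfloor_lo, hfloor_hi⟩

lemma abs_ceil_div_mul_le (hu : 0 < u) (hy : y ∈ zmultiples u) (hx : |x| ≤ y) :
    |(⌈x / u⌉ : ℝ) * u| ≤ y := by
  have h := abs_floor_div_mul_le hu hy (x := -x) (by rwa [abs_neg])
  rwa [neg_div, Int.floor_neg, Int.cast_neg, neg_mul, abs_neg] at h

end Multiples

namespace Faithful

variable {V : Set ℝ} {r s v : ℝ}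

lemma le_of_le (hs : Faithful V r s) (hv : v ∈ V) (h : v ≤ r) : v ≤ s := by
  rcases hs.2.2 with ⟨-, hmax⟩ | ⟨hrs, -⟩
  · exact hmax v hv h
  · exact h.trans hrs

lemma le_of_ge (hs : Faithful V r s) (hv : v ∈ V) (h : r ≤ v) : s ≤ v := by
  rcases hs.2.2 with ⟨hsr, -⟩ | ⟨-, hmin⟩
  · exact hsr.trans h
  · exact hmin v hv h

lemma abs_sub_lt {u : ℝ} (hs : Faithful V r s) (hu : 0 < u)
    (hfloor : (⌊r / u⌋ : ℝ) * u ∈ V) (hceil : (⌈r / u⌉ : ℝ) * u ∈ V) : |s - r| < u := by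
  have hlo := hs.le_of_le hfloor ((le_div_iff₀ hu).mp (Int.floor_le _))
  have hhi := hs.le_of_ge hceil ((div_le_iff₀ hu).mp (Int.le_ceil _))
  have hfloor_gt : r < (⌊r / u⌋ + 1 : ℝ) * u := (div_lt_iff₀ hu).mp (Int.lt_floor_add_one _)
  have hceil_lt : (⌈r / u⌉ : ℝ) * u < r + u := by
    have := (lt_div_iff₀ hu).mp (sub_lt_iff_lt_add.mpr (Int.ceil_lt_add_one (r / u)))
    linarith
  rw [abs_sub_lt_iff]
  constructor <;> linarith

end Faithful

section Format

variable {P : ℕ} {emin emax e E : ℤ} {x : ℝ}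

lemma ulp_pos : 0 < ulp P e := zpow_pos two_pos _

lemma two_pow_mul_ulp : (2 : ℝ) ^ P * ulp P e = 2 ^ (e + 1) := by
  rw [ulp, ← zpow_natCast, ← zpow_add₀ two_ne_zero]
  congr 1
  ring

lemma ulp_succ : ulp P (e + 1) = 2 * ulp P e := by
  rw [ulp, ulp, ← zpow_one_add₀ two_ne_zero]
  congr 1
  ring

lemma ulp_le_ulp (h : e ≤ E) : ulp P e ≤ ulp P E :=
  zpow_le_zpow_right₀ one_le_two (by omega)

lemma two_zpow_mem_zmultiples_ulp (h : e - (P : ℤ) + 1 ≤ E) :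
    (2 : ℝ) ^ E ∈ zmultiples (ulp P e) :=
  two_zpow_mem_zmultiples_two_zpow h

lemma zmultiples_ulp_mono (h : e ≤ E) : zmultiples (ulp P E) ≤ zmultiples (ulp P e) :=
  zmultiples_le.mpr (two_zpow_mem_zmultiples_two_zpow (by omega))

lemma abs_intCast_mul_ulp_lt {m : ℤ} (hm : |m| < 2 ^ P) : |(m : ℝ) * ulp P e| < 2 ^ (e + 1) := by
  rw [abs_mul, abs_of_pos ulp_pos, ← two_pow_mul_ulp, ← Int.cast_abs]
  gcongr
  · exact ulp_pos
  · exact_mod_cast hm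

lemma Mhi_eq : Mhi P emax = 2 ^ (emax + 1) - ulp P emax := by
  rw [Mhi, sub_mul, one_mul, ← ulp, two_pow_mul_ulp]

lemma Mhi_lt_two_zpow : Mhi P emax < 2 ^ (emax + 1) := by
  rw [Mhi_eq]
  linarith [ulp_pos (P := P) (e := emax)]

lemma le_of_two_zpow_le_Mhi (h : (2 : ℝ) ^ e ≤ Mhi P emax) : e ≤ emax :=
  le_of_two_zpow_le_of_lt_two_zpow_add_one h Mhi_lt_two_zpow

lemma Mhi_mem_zmultiples_ulp (h : e ≤ emax) : Mhi P emax ∈ zmultiples (ulp P e) := by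
  rw [Mhi_eq]
  exact zmultiples_ulp_mono h
    (sub_mem (two_zpow_mem_zmultiples_ulp (by omega)) (mem_zmultiples _))

lemma neg_mem_Vf (hx : x ∈ Vf P emin emax) : -x ∈ Vf P emin emax := by
  obtain ⟨m, e, hm, h1, h2, rfl⟩ := hx
  exact ⟨-m, e, by rwa [abs_neg], h1, h2, by push_cast; ring⟩

lemma two_zpow_mem_Vf (hP : 1 ≤ P) (h1 : emin ≤ e) (h2 : e ≤ emax) :
    (2 : ℝ) ^ e ∈ Vf P emin emax := by
  refine ⟨2 ^ (P - 1), e, ?_, h1, h2, ?_⟩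
  · rw [abs_of_nonneg (by positivity)]
    exact pow_lt_pow_right₀ one_lt_two (by omega)
  · rw [Int.cast_pow, Int.cast_ofNat, ← zpow_natCast, ← zpow_add₀ two_ne_zero]
    congr 1
    omega

lemma mem_Vf_of_mem_zmultiples (h1 : emin ≤ e) (h2 : e ≤ emax)
    (hx : x ∈ zmultiples (ulp P e)) (h : |x| < 2 ^ (e + 1)) : x ∈ Vf P emin emax := by
  obtain ⟨m, rfl⟩ := mem_zmultiples_iff.mp hx
  rw [zsmul_eq_mul, abs_mul, abs_of_pos ulp_pos, ← two_pow_mul_ulp, ← Int.cast_abs] at h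
  refine ⟨m, e, ?_, h1, h2, zsmul_eq_mul _ _⟩
  exact_mod_cast lt_of_mul_lt_mul_right h ulp_pos.le

lemma mem_Vf_of_abs_le (hP : 1 ≤ P) (h1 : emin ≤ e) (h2 : e ≤ emax)
    (hx : x ∈ zmultiples (ulp P e)) (h : |x| ≤ 2 ^ (e + 1)) (hM : |x| ≤ Mhi P emax) :
    x ∈ Vf P emin emax := by
  rcases h.lt_or_eq with h | h
  · exact mem_Vf_of_mem_zmultiples h1 h2 hx h
  have he : e + 1 ≤ emax := le_of_two_zpow_le_Mhi (P := P) (h ▸ hM)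
  have hpow : (2 : ℝ) ^ (e + 1) ∈ Vf P emin emax := two_zpow_mem_Vf hP (by omega) he
  rcases abs_eq (zpow_pos two_pos _).le |>.mp h with rfl | rfl
  · exact hpow
  · exact neg_mem_Vf hpow

lemma mem_zmultiples_ulp_of_mem_Vf (hx : x ∈ Vf P emin emax)
    (hE : E ≤ emin ∨ (2 : ℝ) ^ E ≤ |x|) : x ∈ zmultiples (ulp P E) := by
  obtain ⟨m, e, hm, h1, -, rfl⟩ := hx
  have hEe : E ≤ e := by
    rcases hE with hE | hE
    · omega
    · exact le_of_two_zpow_le_of_lt_two_zpow_add_one hE (abs_intCast_mul_ulp_lt hm)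
  exact zmultiples_ulp_mono hEe (intCast_mul_mem_zmultiples _ m)

lemma le_expo (x : ℝ) : emin ≤ expo emin x := by
  unfold expo
  split_ifs
  exacts [le_rfl, le_max_right _ _]

lemma expo_eq_emin_or_two_zpow_expo_le (x : ℝ) :
    expo emin x = emin ∨ (2 : ℝ) ^ expo emin x ≤ |x| := by
  unfold expo
  split_ifs with hx
  · exact Or.inl rfl
  rcases max_choice (Int.log 2 |x|) emin with h | h <;> rw [h]
  · exact Or.inr (by exact_mod_cast Int.zpow_log_le_self one_lt_two (abs_pos.mpr hx))
  · exact Or.inl rfl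

lemma abs_lt_two_zpow_expo_add_one (x : ℝ) : |x| < 2 ^ (expo emin x + 1) := by
  unfold expo
  split_ifs with hx
  · rw [hx, abs_zero]
    positivity
  calc |x| < 2 ^ (Int.log 2 |x| + 1) := by exact_mod_cast Int.lt_zpow_succ_log_self one_lt_two |x|
    _ ≤ _ := zpow_le_zpow_right₀ one_le_two (by omega)

lemma mem_zmultiples_ulp_expo (hx : x ∈ Vf P emin emax) :
    x ∈ zmultiples (ulp P (expo emin x)) :=
  mem_zmultiples_ulp_of_mem_Vf hx ((expo_eq_emin_or_two_zpow_expo_le x).imp le_of_eq id)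

lemma expo_le_of_mem_Vf (hx : x ∈ Vf P emin emax) : expo emin x ≤ emax := by
  obtain ⟨m, e, hm, h1, h2, rfl⟩ := hx
  refine le_trans ?_ h2
  rcases expo_eq_emin_or_two_zpow_expo_le ((m : ℝ) * ulp P e) with h | h
  · exact h.le.trans h1
  · exact le_of_two_zpow_le_of_lt_two_zpow_add_one h (abs_intCast_mul_ulp_lt hm)

lemma le_expo_add_one_of_two_zpow_le_abs_add {a b : ℝ} (hexp : expo emin b ≤ expo emin a)
    (h : (2 : ℝ) ^ E ≤ |a + b|) : E ≤ expo emin a + 1 := by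
  have hb : (2 : ℝ) ^ (expo emin b + 1) ≤ 2 ^ (expo emin a + 1) :=
    zpow_le_zpow_right₀ one_le_two (by omega)
  have h2 : (2 : ℝ) ^ (expo emin a + 1 + 1) = 2 ^ (expo emin a + 1) + 2 ^ (expo emin a + 1) := by
    rw [zpow_add_one₀ two_ne_zero]
    ring
  refine le_of_two_zpow_le_of_lt_two_zpow_add_one h ?_
  linarith [abs_add_le a b, abs_lt_two_zpow_expo_add_one (emin := emin) a,
    abs_lt_two_zpow_expo_add_one (emin := emin) b]

end Format

namespace Faithful

variable {P : ℕ} {emin emax E : ℤ} {r s : ℝ}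

lemma abs_sub_lt_ulp (hs : Faithful (Vf P emin emax) r s) (hP : 1 ≤ P) (h1 : emin ≤ E)
    (h2 : E ≤ emax) (hr : |r| < 2 ^ (E + 1)) (hM : |r| ≤ Mhi P emax) : |s - r| < ulp P E := by
  have hpow : (2 : ℝ) ^ (E + 1) ∈ zmultiples (ulp P E) := two_zpow_mem_zmultiples_ulp (by omega)
  have hMhi : Mhi P emax ∈ zmultiples (ulp P E) := Mhi_mem_zmultiples_ulp h2
  exact hs.abs_sub_lt ulp_pos
    (mem_Vf_of_abs_le hP h1 h2 (intCast_mul_mem_zmultiples _ _)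
      (abs_floor_div_mul_le ulp_pos hpow hr.le) (abs_floor_div_mul_le ulp_pos hMhi hM))
    (mem_Vf_of_abs_le hP h1 h2 (intCast_mul_mem_zmultiples _ _)
      (abs_ceil_div_mul_le ulp_pos hpow hr.le) (abs_ceil_div_mul_le ulp_pos hMhi hM))

lemma mem_zmultiples_ulp (hs : Faithful (Vf P emin emax) r s) (hP : 1 ≤ P) (h1 : emin ≤ E)
    (h2 : E ≤ emax) (hr : (2 : ℝ) ^ E ≤ |r|) : s ∈ zmultiples (ulp P E) := by
  refine mem_zmultiples_ulp_of_mem_Vf hs.1 (Or.inr ?_)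
  have hpow := two_zpow_mem_Vf hP h1 h2
  rcases le_or_gt 0 r with h0 | h0
  · rw [abs_of_nonneg h0] at hr
    exact (hs.le_of_le hpow hr).trans (le_abs_self s)
  · rw [abs_of_neg h0] at hr
    have := hs.le_of_ge (neg_mem_Vf hpow) (by linarith)
    exact (le_neg.mpr this).trans (neg_le_abs s)

lemma abs_sub_left_le {a b : ℝ} (hs : Faithful (Vf P emin emax) (a + b) s) (hP : 1 ≤ P)
    (ha : a ∈ Vf P emin emax) (hb : b ∈ Vf P emin emax) (hexp : expo emin b ≤ expo emin a)
    (hbE : expo emin b < E) (h2 : E ≤ emax) (hEr : (2 : ℝ) ^ E ≤ |a + b|)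
    (hrE : |a + b| < 2 ^ (E + 1)) (hbound : |a + b| ≤ Mhi P emax) :
    |s - a| ≤ ulp P E + 2 ^ (expo emin b + 1) - 2 * ulp P (expo emin b) := by
  have h1 : emin ≤ E := (le_expo b).trans hbE.le
  have hbU := mem_zmultiples_ulp_expo hb
  have hrU : a + b ∈ zmultiples (ulp P (expo emin b)) :=
    add_mem (zmultiples_ulp_mono hexp (mem_zmultiples_ulp_expo ha)) hbU
  have herr : |s - (a + b)| ≤ ulp P E - ulp P (expo emin b) :=
    abs_le_sub_of_mem_zmultiples ulp_pos
      (sub_mem (zmultiples_ulp_mono hbE.le (hs.mem_zmultiples_ulp hP h1 h2 hEr)) hrU)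
      (zmultiples_ulp_mono hbE.le (mem_zmultiples _)) (hs.abs_sub_lt_ulp hP h1 h2 hrE hbound)
  have hbb : |b| ≤ 2 ^ (expo emin b + 1) - ulp P (expo emin b) :=
    abs_le_sub_of_mem_zmultiples ulp_pos hbU (two_zpow_mem_zmultiples_ulp (by omega))
      (abs_lt_two_zpow_expo_add_one b)
  calc |s - a| = |(s - (a + b)) + b| := by ring_nf
    _ ≤ |s - (a + b)| + |b| := abs_add_le _ _
    _ ≤ _ := by linarith

end Faithful

section

variable {P : ℕ} {emin emax E ea eb : ℤ} {a s : ℝ}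

lemma sub_mem_Vf_of_le_expo (hP : 1 ≤ P) (h1 : emin ≤ E) (h2 : E ≤ emax) (hbE : eb < E)
    (hEa : E ≤ ea) (hs : s ∈ zmultiples (ulp P E)) (ha : a ∈ zmultiples (ulp P ea))
    (h : |s - a| ≤ ulp P E + 2 ^ (eb + 1) - 2 * ulp P eb) : s - a ∈ Vf P emin emax := by
  have hsa : s - a ∈ zmultiples (ulp P E) := sub_mem hs (zmultiples_ulp_mono hEa ha)
  have hlt : |s - a| < ulp P E + 2 ^ E := by
    have : (2 : ℝ) ^ (eb + 1) ≤ 2 ^ E := zpow_le_zpow_right₀ one_le_two (by omega)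
    linarith [ulp_pos (P := P) (e := eb)]
  have hle := abs_le_sub_of_mem_zmultiples ulp_pos hsa
    (add_mem (mem_zmultiples _) (two_zpow_mem_zmultiples_ulp (by omega))) hlt
  refine mem_Vf_of_mem_zmultiples h1 h2 hsa (hle.trans_lt ?_)
  rw [add_sub_cancel_left]
  exact zpow_lt_zpow_right₀ one_lt_two (lt_add_one E)

lemma sub_mem_Vf_of_expo_succ (hP : 1 ≤ P) (h1 : emin ≤ ea) (hba : eb ≤ ea)
    (hs : s ∈ zmultiples (ulp P (ea + 1))) (ha : a ∈ zmultiples (ulp P ea))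
    (h : |s - a| ≤ ulp P (ea + 1) + 2 ^ (eb + 1) - 2 * ulp P eb)
    (hM : (2 : ℝ) ^ (ea + 1) ≤ Mhi P emax) : s - a ∈ Vf P emin emax := by
  have hsa : |s - a| ≤ 2 ^ (ea + 1) := by
    have h2P : (2 : ℝ) ≤ 2 ^ P := le_self_pow₀ one_le_two (by omega)
    have hmono : ulp P eb ≤ ulp P ea := ulp_le_ulp hba
    rw [ulp_succ, ← two_pow_mul_ulp (e := eb)] at h
    rw [← two_pow_mul_ulp]
    nlinarith [mul_le_mul_of_nonneg_left hmono (sub_nonneg.mpr h2P)]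
  have h2 : ea + 1 ≤ emax := le_of_two_zpow_le_Mhi hM
  exact mem_Vf_of_abs_le hP h1 (by omega) (sub_mem (zmultiples_ulp_mono (by omega) hs) ha) hsa
    (hsa.trans hM)

end

theorem fastTwoSum_exact_intermediate_general
    (P : ℕ) (emin emax : ℤ) (hP : 1 ≤ P)
    (a b s : ℝ) (ha : a ∈ Vf P emin emax) (hb : b ∈ Vf P emin emax)
    (hexp : expo emin b ≤ expo emin a)
    (hs : Faithful (Vf P emin emax) (a + b) s)
    (hbound : |a + b| ≤ Mhi P emax) :
    s - a ∈ Vf P emin emax := by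
  rcases lt_or_ge |a + b| (2 ^ (expo emin b + 1)) with hsmall | hlarge
  · have hrU := add_mem (zmultiples_ulp_mono hexp (mem_zmultiples_ulp_expo ha))
      (mem_zmultiples_ulp_expo hb)
    have hr := mem_Vf_of_mem_zmultiples (le_expo b) (expo_le_of_mem_Vf hb) hrU hsmall
    rwa [hs.2.1 hr, add_sub_cancel_left]
  have hr0 : 0 < |a + b| := (zpow_pos two_pos _).trans_le hlarge
  obtain ⟨E, hEr, hrE⟩ : ∃ E : ℤ, (2 : ℝ) ^ E ≤ |a + b| ∧ |a + b| < 2 ^ (E + 1) :=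
    ⟨Int.log 2 |a + b|, by exact_mod_cast Int.zpow_log_le_self one_lt_two hr0,
      by exact_mod_cast Int.lt_zpow_succ_log_self (R := ℝ) one_lt_two _⟩
  have hbE : expo emin b < E := le_of_two_zpow_le_of_lt_two_zpow_add_one hlarge hrE
  have h1 : emin ≤ E := (le_expo b).trans hbE.le
  have h2 : E ≤ emax := le_of_two_zpow_le_Mhi (hEr.trans hbound)
  have hsU := hs.mem_zmultiples_ulp hP h1 h2 hEr
  have hsa := hs.abs_sub_left_le hP ha hb hexp hbE h2 hEr hrE hbound
  rcases le_or_gt E (expo emin a) with hEa | hEa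
  · exact sub_mem_Vf_of_le_expo hP h1 h2 hbE hEa hsU (mem_zmultiples_ulp_expo ha) hsa
  · obtain rfl : E = expo emin a + 1 :=
      le_antisymm (le_expo_add_one_of_two_zpow_le_abs_add hexp hEr) hEa
    exact sub_mem_Vf_of_expo_succ hP (le_expo a) hexp hsU (mem_zmultiples_ulp_expo ha) hsa
      (hEr.trans hbound)

theorem fastTwoSum_exact_intermediate
    (P : ℕ) (emin emax : ℤ) (hP : 1 ≤ P) (he : emin ≤ emax)
    (a b s : ℝ) (ha : a ∈ Vf P emin emax) (hb : b ∈ Vf P emin emax)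
    (hexp : expo emin b ≤ expo emin a)
    (hs : Faithful (Vf P emin emax) (a + b) s)
    (hbound : |a + b| ≤ Mhi P emax) :
    s - a ∈ Vf P emin emax :=
  fastTwoSum_exact_intermediate_general P emin emax hP a b s ha hb hexp hs hbound
end

section
/- For a signed P3109 format f, if a and b are finite values of f with |a+b| ≤ M_hi, and s is a round-to-nearest value of a+b in f (i.e., s ∈ V_f minimizes |s − (a+b)| over V_f, with arbitrary tie-breaking), then the rounding error δ = a + b − s is itself exactly representable in f. -/
private lemma two_zpow_pos' (z : ℤ) : (0:ℝ) < 2 ^ z := zpow_pos (by norm_num) z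

private lemma repr_mul' {P : ℕ} {x : ℝ} {m e : ℤ} (E : ℤ) (hE : E ≤ e)
    (hx : x = (m : ℝ) * (2:ℝ) ^ (e - (P:ℤ) + 1)) :
    ∃ k : ℤ, x = (k : ℝ) * (2:ℝ) ^ (E - (P:ℤ) + 1) := by
  refine ⟨m * 2 ^ (e - E).toNat, ?_⟩
  rw [hx]
  have h1 : (e - (P:ℤ) + 1) = (e - E) + (E - (P:ℤ) + 1) := by ring
  rw [h1, zpow_add₀ (two_ne_zero : (2:ℝ) ≠ 0)]
  push_cast
  rw [← zpow_natCast (2:ℝ), Int.toNat_of_nonneg (by omega)]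
  ring

/-- Any representation exponent is at least the canonical exponent. -/
private lemma expo_le' {P : ℕ} {emin : ℤ} {x : ℝ} {m e : ℤ} (hm : |m| < 2 ^ P)
    (he : emin ≤ e) (hx : x = (m:ℝ) * (2:ℝ)^(e - (P:ℤ) + 1)) :
    expo emin x ≤ e := by
  unfold expo
  split
  · exact he
  · rename_i hx0
    refine max_le ?_ he
    have hmR : |(m:ℝ)| < (2:ℝ) ^ (P:ℤ) := by
      rw [← Int.cast_abs, zpow_natCast]
      exact_mod_cast hm
    have hxlt : |x| < (2:ℝ) ^ (e+1) := by
      rw [hx, abs_mul, abs_of_pos (two_zpow_pos' _)]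
      calc |(m:ℝ)| * (2:ℝ)^(e - (P:ℤ) + 1)
          < (2:ℝ)^(P:ℤ) * (2:ℝ)^(e - (P:ℤ) + 1) := by
            exact mul_lt_mul_of_pos_right hmR (two_zpow_pos' _)
        _ = (2:ℝ) ^ (e+1) := by
            rw [← zpow_add₀ (two_ne_zero : (2:ℝ) ≠ 0)]; ring_nf
    have hx0' : (0:ℝ) < |x| := abs_pos.mpr hx0
    have hlog := (Int.lt_zpow_iff_log_lt (b := 2) (by norm_num) hx0').mp
      (by exact_mod_cast hxlt)
    omega

private lemma mul_mem_Vf' {P : ℕ} {emin emax : ℤ} {k e : ℤ} (h1 : emin ≤ e) (h2 : e ≤ emax)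
    (hk : |k| < 2 ^ P) : (k:ℝ) * (2:ℝ)^(e - (P:ℤ)+1) ∈ Vf P emin emax :=
  ⟨k, e, hk, h1, h2, rfl⟩

theorem fastTwoSum_representable_error
    (P : ℕ) (emin emax : ℤ) (hP : 1 ≤ P) (he : emin ≤ emax)
    (a b s : ℝ) (ha : a ∈ Vf P emin emax) (hb : b ∈ Vf P emin emax)
    (hbound : |a + b| ≤ Mhi P emax)
    (hs : Nearest (Vf P emin emax) (a + b) s) :
    a + b - s ∈ Vf P emin emax := by
  obtain ⟨ma, ea, hma, hea1, hea2, haeq⟩ := ha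
  obtain ⟨mb, eb, hmb, heb1, heb2, hbeq⟩ := hb
  obtain ⟨hsV, hsmin⟩ := hs
  set E : ℤ := min ea eb with hEdef
  set u : ℝ := (2:ℝ)^(E - (P:ℤ) + 1) with hudef
  have hupos : 0 < u := two_zpow_pos' _
  have hE1 : emin ≤ E := le_min hea1 heb1
  have hE2 : E ≤ emax := (min_le_left ea eb).trans hea2
  obtain ⟨Ka, hKa⟩ := repr_mul' (P := P) E (min_le_left ea eb) haeq
  obtain ⟨Kb, hKb⟩ := repr_mul' (P := P) E (min_le_right ea eb) hbeq
  set r : ℝ := a + b with hrdef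
  have hrK : r = ((Ka + Kb : ℤ) : ℝ) * u := by rw [hrdef, hKa, hKb, hudef]; push_cast; ring
  have haV : a ∈ Vf P emin emax := ⟨ma, ea, hma, hea1, hea2, haeq⟩
  have hbV : b ∈ Vf P emin emax := ⟨mb, eb, hmb, heb1, heb2, hbeq⟩
  -- cast helper
  have hXP : (2:ℝ)^(P:ℤ) = ((2^P : ℤ) : ℝ) := by
    rw [zpow_natCast]; push_cast; ring
  -- the error is bounded by |a| and by |b|
  have hd1 : |s - r| ≤ |b| := by
    have h := hsmin a haV
    have hab : a - r = -b := by rw [hrdef]; ring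
    rwa [hab, abs_neg] at h
  have hd2 : |s - r| ≤ |a| := by
    have h := hsmin b hbV
    have hab : b - r = -a := by rw [hrdef]; ring
    rwa [hab, abs_neg] at h
  -- mantissa bounds over ℝ
  have hmaR : |(ma:ℝ)| ≤ (2:ℝ)^(P:ℤ) - 1 := by
    have h1 : |ma| ≤ 2^P - 1 := by omega
    have h2 : ((|ma| : ℤ) : ℝ) ≤ ((2^P - 1 : ℤ) : ℝ) := by exact_mod_cast h1
    rw [Int.cast_abs] at h2
    rw [hXP]
    push_cast at h2 ⊢
    linarith
  have hmbR : |(mb:ℝ)| ≤ (2:ℝ)^(P:ℤ) - 1 := by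
    have h1 : |mb| ≤ 2^P - 1 := by omega
    have h2 : ((|mb| : ℤ) : ℝ) ≤ ((2^P - 1 : ℤ) : ℝ) := by exact_mod_cast h1
    rw [Int.cast_abs] at h2
    rw [hXP]
    push_cast at h2 ⊢
    linarith
  -- |s - r| ≤ (2^P - 1) * u
  have hdsmall : |s - r| ≤ ((2:ℝ)^(P:ℤ) - 1) * u := by
    have hPpos : (0:ℝ) < (2:ℝ)^(P:ℤ) - 1 := by
      have : (1:ℝ) < (2:ℝ)^(P:ℤ) := one_lt_zpow₀ (by norm_num) (by omega)
      linarith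
    rcases le_total ea eb with h | h
    · have hEea : E = ea := min_eq_left h
      refine hd2.trans ?_
      rw [haeq, abs_mul, abs_of_pos (two_zpow_pos' _), hudef, hEea]
      exact mul_le_mul_of_nonneg_right hmaR (two_zpow_pos' _).le
    · have hEeb : E = eb := min_eq_right h
      refine hd1.trans ?_
      rw [hbeq, abs_mul, abs_of_pos (two_zpow_pos' _), hudef, hEeb]
      exact mul_le_mul_of_nonneg_right hmbR (two_zpow_pos' _).le
  -- key facts about powers
  have hw1 : (1:ℝ) ≤ (2:ℝ)^((P:ℤ)-1) := one_le_zpow₀ (by norm_num) (by omega)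
  have h2E : (2:ℝ)^E = (2:ℝ)^((P:ℤ)-1) * u := by
    rw [hudef, ← zpow_add₀ (two_ne_zero : (2:ℝ) ≠ 0)]; ring_nf
  have h2E1 : (2:ℝ)^(E+1) = 2 * ((2:ℝ)^((P:ℤ)-1) * u) := by
    rw [hudef, ← zpow_add₀ (two_ne_zero : (2:ℝ) ≠ 0)]
    have h1 : (2:ℝ)^(1 + (((P:ℤ)-1) + (E - (P:ℤ) + 1))) =
        2 * (2:ℝ)^(((P:ℤ)-1) + (E - (P:ℤ) + 1)) := by
      rw [zpow_add₀ (two_ne_zero : (2:ℝ) ≠ 0), zpow_one]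
    rw [show E + 1 = 1 + (((P:ℤ)-1) + (E - (P:ℤ) + 1)) by ring, h1]
  have h2P : (2:ℝ)^(P:ℤ) = 2 * (2:ℝ)^((P:ℤ)-1) := by
    have h1 : (2:ℝ)^(1 + ((P:ℤ)-1)) = 2 * (2:ℝ)^((P:ℤ)-1) := by
      rw [zpow_add₀ (two_ne_zero : (2:ℝ) ≠ 0), zpow_one]
    rw [show (1:ℤ) + ((P:ℤ)-1) = (P:ℤ) by ring] at h1
    exact h1
  have h2Pu : (2:ℝ)^(E+1) = (2:ℝ)^(P:ℤ) * u := by rw [h2E1, h2P]; ring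
  -- s is an integer multiple of u
  have hsu : ∃ ks : ℤ, s = (ks:ℝ) * u := by
    obtain ⟨ms, es, hms, hes1, hes2, hseq⟩ := hsV
    by_cases hs0' : s = 0
    · exact ⟨0, by rw [hs0']; simp⟩
    by_cases hEes : E ≤ expo emin s
    · obtain ⟨k, hk⟩ := repr_mul' (P := P) E (hEes.trans (expo_le' hms hes1 hseq)) hseq
      exact ⟨k, by rw [hk, hudef]⟩
    · push_neg at hEes
      have hs0 : s ≠ 0 := hs0'
      have hlog : Int.log 2 |s| < E := by
        have hx : expo emin s = max (Int.log 2 |s|) emin := by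
          simp only [expo, if_neg hs0]
        omega
      have hslt : |s| < (2:ℝ)^E := by
        have := (Int.lt_zpow_iff_log_lt (b := 2) (R := ℝ) (by norm_num)
          (abs_pos.mpr hs0)).mpr hlog
        exact_mod_cast this
      by_cases hrlt : |r| < (2:ℝ)^(E+1)
      · -- r itself is representable, hence s = r
        have hKR : |((Ka + Kb : ℤ) : ℝ)| * u = |r| := by
          rw [hrK, abs_mul, abs_of_pos hupos]
        have hKab : |Ka + Kb| < 2^P := by
          have h1 : |((Ka + Kb : ℤ) : ℝ)| * u < (2:ℝ)^(P:ℤ) * u := by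
            rw [hKR, ← h2Pu]; exact hrlt
          have h2 : |((Ka + Kb : ℤ) : ℝ)| < (2:ℝ)^(P:ℤ) :=
            lt_of_mul_lt_mul_right h1 hupos.le
          rw [hXP, ← Int.cast_abs] at h2
          exact_mod_cast h2
        have hrV : r ∈ Vf P emin emax := by
          rw [hrK, hudef]
          exact mul_mem_Vf' hE1 hE2 hKab
        have hsr := hsmin r hrV
        simp only [sub_self, abs_zero] at hsr
        have hseqr : s = r := by
          have h0 : |s - r| = 0 := le_antisymm hsr (abs_nonneg _)
          have := abs_eq_zero.mp h0
          linarith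
        exact ⟨Ka + Kb, by rw [hseqr, hrK]⟩
      · exfalso
        push_neg at hrlt
        -- E + 1 ≤ emax
        have hEmax : E + 1 ≤ emax := by
          have hMlt : Mhi P emax < (2:ℝ)^(emax+1) := by
            unfold Mhi
            have h1 : ((2:ℝ)^P - 1) < (2:ℝ)^(P:ℤ) := by
              rw [zpow_natCast]; linarith
            have h2 : (2:ℝ)^(P:ℤ) * (2:ℝ)^(emax - (P:ℤ) + 1) = (2:ℝ)^(emax+1) := by
              rw [← zpow_add₀ (two_ne_zero : (2:ℝ) ≠ 0)]; ring_nf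
            calc ((2:ℝ)^P - 1) * (2:ℝ)^(emax - (P:ℤ) + 1)
                < (2:ℝ)^(P:ℤ) * (2:ℝ)^(emax - (P:ℤ) + 1) :=
                  mul_lt_mul_of_pos_right h1 (two_zpow_pos' _)
              _ = (2:ℝ)^(emax+1) := h2
          have hlt : (2:ℝ)^(E+1) < (2:ℝ)^(emax+1) :=
            lt_of_le_of_lt (hrlt.trans hbound) hMlt
          have := (zpow_lt_zpow_iff_right₀ (by norm_num : (1:ℝ) < 2)).mp hlt
          omega
        -- |s - r| > 2^E
        have hdgt : (2:ℝ)^E < |s - r| := by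
          have habs : |r| - |s| ≤ |s - r| := by
            rw [abs_sub_comm]
            exact abs_sub_abs_le_abs_sub r s
          have h2 : (2:ℝ)^(E+1) = 2 * (2:ℝ)^E := by
            rw [zpow_add₀ (two_ne_zero : (2:ℝ) ≠ 0), zpow_one]; ring
          rw [h2] at hrlt
          linarith
        -- integer bound on Ka + Kb
        set k : ℤ := Ka + Kb with hkdef
        have hkR : |((k : ℤ) : ℝ)| * u < (3 * (2:ℝ)^((P:ℤ)-1)) * u := by
          have h1 : |((k : ℤ) : ℝ)| * u = |r| := by
            rw [hrK, abs_mul, abs_of_pos hupos]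
          have h2 : |r| ≤ |s| + |s - r| := by
            have h3 := abs_sub s (s - r)
            rw [show s - (s - r) = r by ring] at h3
            exact h3
          have h4 : |s - r| ≤ ((2:ℝ)^(P:ℤ) - 1) * u := hdsmall
          have h5 : ((2:ℝ)^(P:ℤ) - 1) * u < 2 * (2:ℝ)^((P:ℤ)-1) * u := by
            rw [h2P]
            nlinarith [hupos]
          rw [h1]
          calc |r| ≤ |s| + |s - r| := h2
            _ < (2:ℝ)^E + 2 * (2:ℝ)^((P:ℤ)-1) * u := by
                have := lt_of_le_of_lt h4 h5
                linarith
            _ = (3 * (2:ℝ)^((P:ℤ)-1)) * u := by rw [h2E]; ring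
        have hnR : (((2:ℤ)^(P-1) : ℤ) : ℝ) = (2:ℝ)^((P:ℤ)-1) := by
          push_cast
          rw [← zpow_natCast (2:ℝ) (P-1)]
          congr 1
          omega
        have hkZ : |k| < 3 * 2^(P-1) := by
          have h1 : |((k : ℤ) : ℝ)| < 3 * (2:ℝ)^((P:ℤ)-1) :=
            lt_of_mul_lt_mul_right hkR hupos.le
          have h2 : |((k : ℤ) : ℝ)| < ((3 * 2^(P-1) : ℤ) : ℝ) := by
            rw [show ((3 * 2^(P-1) : ℤ) : ℝ) = 3 * (((2:ℤ)^(P-1) : ℤ) : ℝ) by push_cast; ring, hnR]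
            exact h1
          rw [← Int.cast_abs] at h2
          exact_mod_cast h2
        -- the nearby even grid point
        set n : ℤ := 2^(P-1) with hndef
        have hnpos : 0 < n := pow_pos (by norm_num) _
        have h2Pn : (2:ℤ)^P = 2 * n := by
          rw [hndef, ← pow_succ']
          congr 1
          omega
        set m : ℤ := k / 2 with hmdef
        have hmabs : |m| < 2^P := by
          rw [h2Pn]
          rcases abs_lt.mp hkZ with ⟨hl, hr2⟩
          rw [abs_lt]
          constructor <;> omega
        set v : ℝ := (m : ℝ) * (2:ℝ)^((E+1) - (P:ℤ) + 1) with hvdef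
        have hvV : v ∈ Vf P emin emax := mul_mem_Vf' (by omega) hEmax hmabs
        have hvu : v = ((2 * m : ℤ) : ℝ) * u := by
          rw [hvdef, hudef]
          have h1 : (2:ℝ)^(1 + (E - (P:ℤ) + 1)) = 2 * (2:ℝ)^(E - (P:ℤ) + 1) := by
            rw [zpow_add₀ (two_ne_zero : (2:ℝ) ≠ 0), zpow_one]
          rw [show (E+1) - (P:ℤ) + 1 = 1 + (E - (P:ℤ) + 1) by ring, h1]
          push_cast
          ring
        have hvr : |v - r| ≤ u := by
          have heq : v - r = ((2 * m - k : ℤ) : ℝ) * u := by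
            rw [hvu, hrK]
            push_cast
            ring
          rw [heq, abs_mul, abs_of_pos hupos]
          have habs1 : |2 * m - k| ≤ 1 := by
            rw [abs_le]
            constructor <;> omega
          have habsR : |((2 * m - k : ℤ) : ℝ)| ≤ 1 := by
            rw [← Int.cast_abs]
            exact_mod_cast habs1
          calc |((2 * m - k : ℤ) : ℝ)| * u ≤ 1 * u :=
              mul_le_mul_of_nonneg_right habsR hupos.le
            _ = u := one_mul u
        have hule : u ≤ (2:ℝ)^E := by
          rw [h2E]
          calc u = 1 * u := (one_mul u).symm
            _ ≤ (2:ℝ)^((P:ℤ)-1) * u := mul_le_mul_of_nonneg_right hw1 hupos.le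
        have := hsmin v hvV
        linarith [hvr.trans hule]
  -- conclude
  obtain ⟨ks, hks⟩ := hsu
  have hδ : a + b - s = ((Ka + Kb - ks : ℤ):ℝ) * u := by
    rw [← hrdef, hrK, hks]
    push_cast
    ring
  have h1 : |((Ka + Kb - ks : ℤ):ℝ)| * u ≤ ((2:ℝ)^(P:ℤ) - 1) * u := by
    have heq : |((Ka + Kb - ks : ℤ):ℝ)| * u = |a + b - s| := by
      rw [hδ, abs_mul, abs_of_pos hupos]
    have heq2 : |a + b - s| = |s - r| := by rw [hrdef, abs_sub_comm]
    rw [heq, heq2]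
    exact hdsmall
  have h2 : |((Ka + Kb - ks : ℤ):ℝ)| ≤ (2:ℝ)^(P:ℤ) - 1 :=
    le_of_mul_le_mul_right h1 hupos
  have h3 : |Ka + Kb - ks| < 2^P := by
    have h4 : |((Ka + Kb - ks : ℤ):ℝ)| < (2:ℝ)^(P:ℤ) := by linarith [h2]
    rw [hXP, ← Int.cast_abs] at h4
    exact_mod_cast h4
  rw [hδ, hudef]
  exact mul_mem_Vf' hE1 hE2 h3
end

section
/- For a signed P3109 format f, let a, b be finite values of f with exponent(a) ≥ exponent(b). Suppose |a+b| > M_hi but the computed sum saturates, i.e., |s| = M_hi with sign(s) = sign(a+b). If z = s − a is representable and t is a faithful rounding of b − z, then t = a + b − s exactly: FastTwoSum computes the exact overflow error under saturation, for any rounding mode used in the first operation. -/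
/-- Rewrite a dyadic at a smaller exponent. -/
lemma dyadic_shift (m e F : ℤ) (hF : F ≤ e) :
    ∃ k : ℤ, (m : ℝ) * (2 : ℝ) ^ e = (k : ℝ) * (2 : ℝ) ^ F := by
  refine ⟨m * 2 ^ (e - F).toNat, ?_⟩
  have h1 : ((2 : ℝ)) ^ (e - F).toNat = (2 : ℝ) ^ (e - F) := by
    rw [← zpow_natCast, Int.toNat_of_nonneg (by omega)]
  push_cast
  rw [h1, mul_assoc, ← zpow_add₀ (by norm_num : (2:ℝ) ≠ 0), sub_add_cancel]

/-- The canonical exponent is at most any representation exponent. -/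
lemma expo_le_of_rep (P : ℕ) (emin : ℤ) (x : ℝ) (m e : ℤ)
    (hm : |m| < 2 ^ P) (hle : emin ≤ e)
    (hx : x = (m : ℝ) * (2 : ℝ) ^ (e - (P : ℤ) + 1)) :
    expo emin x ≤ e := by
  unfold expo
  split
  · exact hle
  · refine max_le ?_ hle
    have hmr : |(m : ℝ)| < (2 : ℝ) ^ (P : ℤ) := by
      exact_mod_cast hm
    have hxlt : |x| < (2 : ℝ) ^ (e + 1) := by
      rw [hx, abs_mul, abs_of_pos (zpow_pos (by norm_num : (0:ℝ) < 2) _)]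
      calc |(m:ℝ)| * (2:ℝ) ^ (e - (P:ℤ) + 1)
          < (2:ℝ) ^ (P:ℤ) * (2:ℝ) ^ (e - (P:ℤ) + 1) := by
            exact mul_lt_mul_of_pos_right hmr (zpow_pos (by norm_num) _)
        _ = (2:ℝ) ^ (e + 1) := by
            rw [← zpow_add₀ (by norm_num : (2:ℝ) ≠ 0)]; ring_nf
    have h0 : (0:ℝ) < |x| := abs_pos.mpr (by assumption)
    have := (Int.lt_zpow_iff_log_lt (b := 2) (by norm_num) h0).mp (by
      exact_mod_cast hxlt)
    omega

/-- Elements of `Vf` are multiples of `2 ^ (expo - P + 1)` for any smaller exponent. -/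
lemma mem_multiple (P : ℕ) (emin emax : ℤ) (x : ℝ) (F : ℤ)
    (hx : x ∈ Vf P emin emax) (hF : F ≤ expo emin x) :
    ∃ k : ℤ, x = (k : ℝ) * (2 : ℝ) ^ (F - (P : ℤ) + 1) := by
  obtain ⟨m, e, hm, he1, he2, hxe⟩ := hx
  have hE : expo emin x ≤ e := expo_le_of_rep P emin x m e hm he1 hxe
  obtain ⟨k, hk⟩ := dyadic_shift m (e - (P:ℤ) + 1) (F - (P:ℤ) + 1) (by omega)
  exact ⟨k, by rw [hxe, hk]⟩

lemma abs_le_Mhi (P : ℕ) (emin emax : ℤ) (x : ℝ) (hx : x ∈ Vf P emin emax) :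
    |x| ≤ Mhi P emax := by
  obtain ⟨m, e, hm, he1, he2, hxe⟩ := hx
  have hmr : |(m : ℝ)| ≤ (2 : ℝ) ^ P - 1 := by
    have : (m : ℤ) ≤ 2 ^ P - 1 ∧ -(2 ^ P - 1) ≤ m := by
      constructor <;> [skip; skip] <;> (have := abs_lt.mp hm; omega)
    rw [abs_le]
    constructor <;> push_cast <;> [exact_mod_cast this.2; exact_mod_cast this.1]
  rw [hxe, abs_mul, abs_of_pos (zpow_pos (by norm_num : (0:ℝ) < 2) _)]
  unfold Mhi
  have h1 : (2:ℝ) ^ (e - (P:ℤ) + 1) ≤ (2:ℝ) ^ (emax - (P:ℤ) + 1) :=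
    zpow_le_zpow_right₀ (by norm_num) (by omega)
  have h2 : (0:ℝ) ≤ (2:ℝ) ^ P - 1 := by
    have : (1:ℝ) ≤ 2 ^ P := one_le_pow₀ (by norm_num)
    linarith
  calc |(m:ℝ)| * (2:ℝ) ^ (e - (P:ℤ) + 1)
      ≤ ((2:ℝ) ^ P - 1) * (2:ℝ) ^ (e - (P:ℤ) + 1) :=
        mul_le_mul_of_nonneg_right hmr (le_of_lt (zpow_pos (by norm_num) _))
    _ ≤ ((2:ℝ) ^ P - 1) * (2:ℝ) ^ (emax - (P:ℤ) + 1) := by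
        nlinarith [h1, h2]

theorem fastTwoSum_exact_overflow_error
    (P : ℕ) (emin emax : ℤ) (hP : 1 ≤ P) (he : emin ≤ emax)
    (a b s t : ℝ) (ha : a ∈ Vf P emin emax) (hb : b ∈ Vf P emin emax)
    (hexp : expo emin b ≤ expo emin a)
    (hover : Mhi P emax < |a + b|)
    (hsat : |s| = Mhi P emax) (hsign : Real.sign s = Real.sign (a + b))
    (hz : s - a ∈ Vf P emin emax)
    (ht : Faithful (Vf P emin emax) (b - (s - a)) t) :
    t = a + b - s := by
  -- basic positivity
  have hM0 : (0:ℝ) < Mhi P emax := by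
    unfold Mhi
    have : (2:ℝ) ≤ 2 ^ P := by
      calc (2:ℝ) = 2 ^ 1 := (pow_one 2).symm
      _ ≤ 2 ^ P := pow_le_pow_right₀ (by norm_num) hP
    exact mul_pos (by linarith) (zpow_pos (by norm_num) _)
  have haM : |a| ≤ Mhi P emax := abs_le_Mhi P emin emax a ha
  have hbM : |b| ≤ Mhi P emax := abs_le_Mhi P emin emax b hb
  have hb0 : b ≠ 0 := by
    intro h; rw [h, add_zero] at hover; linarith [hover, haM]
  have hab0 : a + b ≠ 0 := by
    intro h; rw [h] at hover; simp at hover; linarith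
  set eb := expo emin b with heb
  -- eb range
  have heb_lo : emin ≤ eb := by
    unfold eb; unfold expo; split
    · rfl
    · exact le_max_right _ _
  have hblt : |b| < (2:ℝ) ^ (eb + 1) := by
    have h1 : |b| < ((2:ℕ):ℝ) ^ (Int.log 2 |b| + 1) :=
      Int.lt_zpow_succ_log_self (by norm_num) |b|
    have h2 : Int.log 2 |b| ≤ eb := by
      unfold eb; unfold expo
      rw [if_neg hb0]; exact le_max_left _ _
    calc |b| < ((2:ℕ):ℝ) ^ (Int.log 2 |b| + 1) := h1
      _ ≤ ((2:ℕ):ℝ) ^ (eb + 1) := zpow_le_zpow_right₀ (by norm_num) (by omega)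
      _ = (2:ℝ) ^ (eb + 1) := by norm_num
  have heb_hi : eb ≤ emax := by
    have hMlt : Mhi P emax < (2:ℝ) ^ (emax + 1) := by
      unfold Mhi
      have : ((2:ℝ) ^ P) * (2:ℝ) ^ (emax - (P:ℤ) + 1) = (2:ℝ) ^ (emax + 1) := by
        rw [← zpow_natCast (2:ℝ) P, ← zpow_add₀ (by norm_num : (2:ℝ) ≠ 0)]
        ring_nf
      nlinarith [zpow_pos (by norm_num : (0:ℝ) < 2) (emax - (P:ℤ) + 1)]
    have h1 : |b| < ((2:ℕ):ℝ) ^ (emax + 1) := by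
      push_cast; linarith [hbM]
    have h2 := (Int.lt_zpow_iff_log_lt (b := 2) (by norm_num)
      (abs_pos.mpr hb0)).mp h1
    unfold eb; unfold expo
    rw [if_neg hb0]
    exact max_le (by omega) he
  -- s is ± Mhi, matching sign of a + b
  have hsM : (0 < a + b ∧ s = Mhi P emax) ∨ (a + b < 0 ∧ s = -Mhi P emax) := by
    rcases lt_trichotomy (a + b) 0 with h | h | h
    · right
      refine ⟨h, ?_⟩
      rw [Real.sign_of_neg h] at hsign
      have hs0 : s < 0 := by
        by_contra hs
        push_neg at hs
        rcases eq_or_lt_of_le hs with h' | h'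
        · rw [← h', Real.sign_zero] at hsign; norm_num at hsign
        · rw [Real.sign_of_pos h'] at hsign; norm_num at hsign
      rw [abs_of_neg hs0] at hsat; linarith
    · exact absurd h hab0
    · left
      refine ⟨h, ?_⟩
      rw [Real.sign_of_pos h] at hsign
      have hs0 : 0 < s := by
        by_contra hs
        push_neg at hs
        rcases eq_or_lt_of_le hs with h' | h'
        · rw [h', Real.sign_zero] at hsign; norm_num at hsign
        · rw [Real.sign_of_neg h'] at hsign; norm_num at hsign
      rw [abs_of_pos hs0] at hsat; linarith
  -- the error r = a + b - s satisfies |r| ≤ |b|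
  set r := a + b - s with hr
  have hrb : |r| ≤ |b| := by
    rcases hsM with ⟨hpos, hs⟩ | ⟨hneg, hs⟩
    · have h1 : Mhi P emax < a + b := by rw [abs_of_pos hpos] at hover; exact hover
      have h2 : a ≤ Mhi P emax := (abs_le.mp haM).2
      have h3 : 0 ≤ b := by linarith
      rw [abs_of_nonneg h3, abs_of_pos (by rw [hr, hs]; linarith)]
      rw [hr, hs]; linarith
    · have h1 : a + b < -(Mhi P emax) := by rw [abs_of_neg hneg] at hover; linarith
      have h2 : -(Mhi P emax) ≤ a := (abs_le.mp haM).1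
      have h3 : b ≤ 0 := by linarith
      rw [abs_of_nonpos h3, abs_of_neg (by rw [hr, hs]; linarith)]
      rw [hr, hs]; linarith
  -- all of a, b, s are multiples of u = 2 ^ (eb - P + 1)
  obtain ⟨ka, hka⟩ := mem_multiple P emin emax a eb ha hexp
  obtain ⟨kb, hkb⟩ := mem_multiple P emin emax b eb hb le_rfl
  have hsVf : ∃ ks : ℤ, s = (ks : ℝ) * (2:ℝ) ^ (eb - (P:ℤ) + 1) := by
    have hMrep : ∃ km : ℤ, Mhi P emax = (km : ℝ) * (2:ℝ) ^ (eb - (P:ℤ) + 1) := by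
      obtain ⟨k, hk⟩ := dyadic_shift (2 ^ P - 1) (emax - (P:ℤ) + 1)
        (eb - (P:ℤ) + 1) (by omega)
      refine ⟨k, ?_⟩
      unfold Mhi
      rw [← hk]; push_cast; ring
    obtain ⟨km, hkm⟩ := hMrep
    rcases hsM with ⟨_, hs⟩ | ⟨_, hs⟩
    · exact ⟨km, by rw [hs, hkm]⟩
    · exact ⟨-km, by rw [hs, hkm]; push_cast; ring⟩
  obtain ⟨ks, hks⟩ := hsVf
  set u := (2:ℝ) ^ (eb - (P:ℤ) + 1) with hu
  have hu0 : (0:ℝ) < u := zpow_pos (by norm_num) _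
  -- r is a multiple of u with small coefficient
  have hrK : r = ((ka + kb - ks : ℤ) : ℝ) * u := by
    rw [hr, hka, hkb, hks]; push_cast; ring
  have hkbP : |kb| < (2:ℤ) ^ P := by
    have h1 : |(kb:ℝ)| * u < (2:ℝ) ^ (eb + 1) := by
      rw [← abs_of_pos hu0, ← abs_mul, ← hkb]; exact hblt
    have h2 : (2:ℝ) ^ (eb + 1) = (2:ℝ) ^ (P:ℤ) * u := by
      rw [hu, ← zpow_add₀ (by norm_num : (2:ℝ) ≠ 0)]; ring_nf
    have h3 : |(kb:ℝ)| < (2:ℝ) ^ (P:ℤ) := by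
      rw [h2] at h1
      exact lt_of_mul_lt_mul_right (by linarith) (le_of_lt hu0)
    exact_mod_cast h3
  have hKkb : |ka + kb - ks| ≤ |kb| := by
    have h1 : |((ka + kb - ks : ℤ) : ℝ)| * u ≤ |(kb:ℝ)| * u := by
      rw [← abs_of_pos hu0, ← abs_mul, ← abs_mul, ← hrK, ← hkb]; exact hrb
    have h2 : |((ka + kb - ks : ℤ) : ℝ)| ≤ |(kb:ℝ)| :=
      le_of_mul_le_mul_right h1 hu0
    exact_mod_cast h2
  -- hence r ∈ Vf
  have hrVf : r ∈ Vf P emin emax :=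
    ⟨ka + kb - ks, eb, by omega, heb_lo, heb_hi, hrK⟩
  -- conclude via faithfulness
  have : b - (s - a) = r := by rw [hr]; ring
  rw [this] at ht
  exact ht.2.1 hrVf
end

section
/- (ExtractScalar low part bound) Under the ExtractScalar hypotheses: signed P3109 format f with P ≥ 2, σ = 2^i ∈ V_f, x ∈ V_f with |x| ≤ 2^(−j)·σ for some integer j ≥ 0, |σ + x| ≤ M_hi, s a round-to-nearest value of σ + x, x_h = s − σ, x_ℓ = x − x_h; then |x_ℓ| ≤ 2^(−P)·σ. -/
theorem extractScalar_low_part_bound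
    (P : ℕ) (emin emax : ℤ) (hP : 2 ≤ P) (he : emin ≤ emax)
    (i j : ℤ) (hj : 0 ≤ j)
    (σ x s : ℝ)
    (hσ : σ = (2 : ℝ) ^ i) (hσV : σ ∈ Vf P emin emax)
    (hx : x ∈ Vf P emin emax) (hxb : |x| ≤ (2 : ℝ) ^ (-j) * σ)
    (hbound : |σ + x| ≤ Mhi P emax)
    (hs : Nearest (Vf P emin emax) (σ + x) s) :
    |x - (s - σ)| ≤ (2 : ℝ) ^ (-(P : ℤ)) * σ := by
  have h2ne : (2:ℝ) ≠ 0 := two_ne_zero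
  have hσpos : (0:ℝ) < σ := by rw [hσ]; positivity
  set r : ℝ := σ + x with hr
  obtain ⟨hsV, hsmin⟩ := hs
  -- bounds on i from σ ∈ Vf
  obtain ⟨mσ, eσ, hmσ, heσ1, heσ2, hσeq⟩ := hσV
  have hmσval : (mσ:ℝ) = (2:ℝ) ^ (i - eσ + (P:ℤ) - 1) := by
    have hA : ((2:ℝ) ^ (eσ - (P:ℤ) + 1)) ≠ 0 := (zpow_pos (by norm_num) _).ne'
    apply mul_right_cancel₀ hA
    rw [← hσeq, hσ, ← zpow_add₀ h2ne]
    congr 1; ring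
  have habs : |(mσ:ℝ)| = (2:ℝ) ^ (i - eσ + (P:ℤ) - 1) := by
    rw [hmσval, abs_of_pos (zpow_pos (by norm_num) _)]
  have hmσne : mσ ≠ 0 := by
    intro h
    rw [h, Int.cast_zero] at hmσval
    exact (zpow_pos (show (0:ℝ)<2 by norm_num) _).ne' hmσval.symm
  have ht0 : 0 ≤ i - eσ + (P:ℤ) - 1 := by
    have h1 : (1:ℝ) ≤ |(mσ:ℝ)| := by
      rw [← Int.cast_abs]; exact_mod_cast Int.one_le_abs hmσne
    rw [habs] at h1
    have := (zpow_le_zpow_iff_right₀ (show (1:ℝ)<2 by norm_num)).mp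
      (by simpa using h1 : (2:ℝ)^(0:ℤ) ≤ (2:ℝ)^(i - eσ + (P:ℤ) - 1))
    exact this
  have htP : i - eσ + (P:ℤ) - 1 < (P:ℤ) := by
    have h1 : |(mσ:ℝ)| < (2:ℝ) ^ ((P:ℤ)) := by
      rw [← Int.cast_abs, zpow_natCast]
      exact_mod_cast hmσ
    rw [habs] at h1
    exact (zpow_lt_zpow_iff_right₀ (show (1:ℝ)<2 by norm_num)).mp h1
  have hiP : emin ≤ i + (P:ℤ) - 1 := by omega
  have hie : i ≤ emax := by omega
  -- basic bounds on x and r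
  have hxσ : |x| ≤ σ := by
    refine hxb.trans ?_
    have : (2:ℝ) ^ (-j) ≤ 1 :=
      zpow_le_one_of_nonpos₀ (by norm_num) (by omega)
    nlinarith
  have hr0 : 0 ≤ r := by
    have := (abs_le.mp hxσ).1; rw [hr]; linarith
  have hr2σ : r ≤ 2 * σ := by
    have := (abs_le.mp hxσ).2; rw [hr]; linarith
  have hbndpos : (0:ℝ) < (2:ℝ) ^ (-(P:ℤ)) * σ := by positivity
  -- key existence
  have key : ∃ v ∈ Vf P emin emax, |v - r| ≤ (2:ℝ) ^ (-(P:ℤ)) * σ := by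
    by_cases hcase : emin ≤ i
    · -- normal range
      set δ : ℝ := (2:ℝ) ^ (i - (P:ℤ) + 1) with hδdef
      have hδpos : 0 < δ := zpow_pos (by norm_num) _
      set n : ℤ := round (r / δ) with hn
      have hround : |r / δ - n| ≤ 1/2 := abs_sub_round _
      have hhalf : (1/2 : ℝ) * δ = (2:ℝ) ^ (-(P:ℤ)) * σ := by
        rw [hσ, hδdef]
        rw [show (1/2:ℝ) = (2:ℝ)^(-1:ℤ) by norm_num,
          ← zpow_add₀ h2ne, ← zpow_add₀ h2ne]
        congr 1; ring
      have hnδ : |(n:ℝ) * δ - r| ≤ (2:ℝ) ^ (-(P:ℤ)) * σ := by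
        have heq : (n:ℝ) * δ - r = -((r/δ - n) * δ) := by
          rw [sub_mul, div_mul_cancel₀ _ hδpos.ne']; ring
        rw [heq, abs_neg, abs_mul, abs_of_pos hδpos, ← hhalf]
        nlinarith
      have hn0 : 0 ≤ n := by
        have hd : (0:ℝ) ≤ r / δ := div_nonneg hr0 hδpos.le
        have := (abs_le.mp hround).2
        by_contra h
        have : (n:ℝ) ≤ -1 := by exact_mod_cast (by omega : n ≤ -1)
        linarith
      have h2σδ : 2 * σ = (2:ℝ)^((P:ℤ)) * δ := by
        rw [hσ, hδdef, ← zpow_add₀ h2ne,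
          show (2:ℝ) * 2^i = 2^(1:ℤ) * 2^i by norm_num, ← zpow_add₀ h2ne]
        congr 1; ring
      have hrδ : r / δ ≤ (2:ℝ)^((P:ℤ)) := by
        rw [div_le_iff₀ hδpos]; linarith [h2σδ ▸ hr2σ]
      by_cases hncase : n < 2 ^ P
      · refine ⟨(n:ℝ) * δ, ⟨n, i, ?_, hcase, hie, rfl⟩, hnδ⟩
        rw [abs_of_nonneg hn0]; exact hncase
      · -- n ≥ 2^P : r is near 2^(i+1)
        push_neg at hncase
        have hnR : (2:ℝ)^((P:ℤ)) ≤ (n:ℝ) := by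
          rw [zpow_natCast]; exact_mod_cast hncase
        have hrlow : (2:ℝ)^((P:ℤ)) * δ - (1/2) * δ ≤ r := by
          have := (abs_le.mp hround).1
          have : (n:ℝ) - 1/2 ≤ r / δ := by linarith
          have h2 : ((n:ℝ) - 1/2) * δ ≤ r := by
            rw [← div_mul_cancel₀ r hδpos.ne']; nlinarith
          nlinarith
        have hiemax : i < emax := by
          by_contra h'
          have hi : i = emax := le_antisymm hie (by omega)
          have hM : Mhi P emax = ((2:ℝ)^((P:ℤ)) - 1) * δ := by
            rw [Mhi, hδdef, hi, ← zpow_natCast]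
          have hrM : r ≤ ((2:ℝ)^((P:ℤ)) - 1) * δ := by
            rw [← hM]; rw [abs_of_nonneg hr0] at hbound; exact hbound
          -- then r/δ ≤ 2^P - 1 so n ≤ 2^P - 1/2 < 2^P
          have h1 : r / δ ≤ (2:ℝ)^((P:ℤ)) - 1 := by
            rw [div_le_iff₀ hδpos]; linarith
          have := (abs_le.mp hround).2
          linarith
        refine ⟨(2:ℝ)^(i+1), ⟨2^(P-1), i+1, ?_, by omega, by omega, ?_⟩, ?_⟩
        · rw [abs_of_nonneg (by positivity)]
          exact pow_lt_pow_right₀ (by norm_num) (by omega)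
        · push_cast
          rw [← zpow_natCast (2:ℝ) (P-1), ← zpow_add₀ h2ne]
          congr 1
          have : ((P - 1 : ℕ) : ℤ) = (P:ℤ) - 1 := by omega
          rw [this]; ring
        · have hv : (2:ℝ)^(i+1) = (2:ℝ)^((P:ℤ)) * δ := by
            rw [hδdef, ← zpow_add₀ h2ne]; congr 1; ring
          rw [abs_of_nonneg (by rw [hv]; linarith [h2σδ ▸ hr2σ]), hv, ← hhalf]
          linarith
    · -- subnormal range: r itself is in Vf
      push_neg at hcase
      refine ⟨r, ?_, by simpa using hbndpos.le⟩
      obtain ⟨mx, ex, hmx, hex1, hex2, hxeq⟩ := hx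
      set a : ℕ := (i - emin + (P:ℤ) - 1).toNat with ha
      set b : ℕ := (ex - emin).toNat with hb
      have haz : (a:ℤ) = i - emin + (P:ℤ) - 1 := Int.toNat_of_nonneg (by omega)
      have hbz : (b:ℤ) = ex - emin := Int.toNat_of_nonneg (by omega)
      refine ⟨2^a + mx * 2^b, emin, ?_, le_refl _, he, ?_⟩
      · -- |k| < 2^P
        have hkval : ((2^a + mx * 2^b : ℤ) : ℝ) * (2:ℝ)^(emin - (P:ℤ) + 1) = r := by
          push_cast
          rw [add_mul, hr, hσ, hxeq]
          congr 1
          · rw [← zpow_natCast (2:ℝ) a, ← zpow_add₀ h2ne, haz]; congr 1; ring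
          · rw [mul_assoc, ← zpow_natCast (2:ℝ) b, ← zpow_add₀ h2ne, hbz]
            congr 2; ring
        have hδ0pos : (0:ℝ) < (2:ℝ)^(emin - (P:ℤ) + 1) := zpow_pos (by norm_num) _
        have hrsmall : |r| ≤ (2:ℝ)^((P:ℤ)-1) * (2:ℝ)^(emin - (P:ℤ) + 1) := by
          rw [abs_of_nonneg hr0, ← zpow_add₀ h2ne]
          have : (2:ℝ)^((P:ℤ)-1+(emin - (P:ℤ) + 1)) = (2:ℝ)^emin := by congr 1; ring
          rw [this]
          have h1 : 2 * σ = (2:ℝ)^(i+1) := by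
            rw [hσ, show (2:ℝ) * 2^i = 2^(1:ℤ) * 2^i by norm_num, ← zpow_add₀ h2ne]
            congr 1; ring
          have h2 : (2:ℝ)^(i+1) ≤ (2:ℝ)^emin :=
            (zpow_le_zpow_iff_right₀ (show (1:ℝ)<2 by norm_num)).mpr (by omega)
          linarith
        have hkabs : |((2^a + mx * 2^b : ℤ) : ℝ)| ≤ (2:ℝ)^((P:ℤ)-1) := by
          have := hkval ▸ hrsmall
          rw [abs_mul, abs_of_pos hδ0pos] at this
          exact le_of_mul_le_mul_right this hδ0pos
        have : |((2^a + mx * 2^b : ℤ) : ℝ)| < (2:ℝ)^((P:ℤ)) :=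
          hkabs.trans_lt ((zpow_lt_zpow_iff_right₀ (show (1:ℝ)<2 by norm_num)).mpr (by omega))
        rw [← Int.cast_abs, zpow_natCast] at this
        exact_mod_cast this
      · -- value equation
        push_cast
        rw [add_mul, hr, hσ, hxeq]
        congr 1
        · rw [← zpow_natCast (2:ℝ) a, ← zpow_add₀ h2ne, haz]; congr 1; ring
        · rw [mul_assoc, ← zpow_natCast (2:ℝ) b, ← zpow_add₀ h2ne, hbz]
          congr 2; ring
  obtain ⟨v, hv, hvb⟩ := key
  have heq : x - (s - σ) = -(s - r) := by rw [hr]; ring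
  rw [heq, abs_neg]
  exact (hsmin v hv).trans hvb
end

section
/- (ExtractScalar high part bound fails for P = 1) There exists a signed P3109 format f with precision P = 1, a power of two σ = 2^i ∈ V_f with i odd, an x ∈ V_f and integer j ≥ 0 with |x| ≤ 2^(−j)·σ and |σ + x| ≤ M_hi, such that for s the round-to-nearest-ties-to-even-exponent value of σ + x, the high part x_h = s − σ satisfies |x_h| > 2^(−j)·σ. -/
/-- Round-to-nearest with ties broken toward the value whose canonical
EXPONENT is even (the `P = 1` tie-breaking rule of P3109). -/
def NearestTiesToEvenExpo (V : Set ℝ) (emin : ℤ) (r s : ℝ) : Prop :=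
  Nearest V r s ∧ ∀ v ∈ V, |v - r| = |s - r| → v ≠ s → Even (expo emin s)

lemma mem_Vf_cases (s : ℝ) (h : s ∈ Vf 1 0 2) :
    s = -4 ∨ s = -2 ∨ s = -1 ∨ s = 0 ∨ s = 1 ∨ s = 2 ∨ s = 4 := by
  obtain ⟨m, e, hm, he0, he2, hs⟩ := h
  rw [abs_lt] at hm
  obtain ⟨hm1, hm2⟩ := hm
  norm_num at hm1 hm2 hs
  interval_cases m <;> interval_cases e <;> norm_num at hs <;> simp [hs]

lemma log_two_two : Int.log 2 (2:ℝ) = 1 := by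
  have := Int.log_zpow (b := 2) (R := ℝ) (by norm_num) 1
  simpa using this

theorem extractScalar_high_bound_fails_P1 :
    ∃ (emin emax : ℤ), emin ≤ emax ∧
    ∃ i : ℤ, Odd i ∧
    ∃ σ x : ℝ, σ = (2 : ℝ) ^ i ∧
      σ ∈ Vf 1 emin emax ∧ x ∈ Vf 1 emin emax ∧
    ∃ j : ℤ, 0 ≤ j ∧ |x| ≤ (2 : ℝ) ^ (-j) * σ ∧
      |σ + x| ≤ Mhi 1 emax ∧
      ∀ s : ℝ, NearestTiesToEvenExpo (Vf 1 emin emax) emin (σ + x) s →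
        (2 : ℝ) ^ (-j) * σ < |s - σ| := by
  refine ⟨0, 2, by norm_num, 1, ⟨0, by ring⟩, 2, 1, by norm_num, ?_, ?_, 1, by norm_num,
    ?_, ?_, ?_⟩
  · exact ⟨1, 1, by norm_num⟩
  · exact ⟨1, 0, by norm_num⟩
  · norm_num
  · simp [Mhi]; norm_num
  · intro s ⟨⟨hsV, hnear⟩, htie⟩
    have h4 : (4 : ℝ) ∈ Vf 1 0 2 := ⟨1, 2, by norm_num⟩
    have hb := hnear 4 h4
    norm_num at hb
    have hcases := mem_Vf_cases s hsV
    have hne : s ≠ 2 := by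
      intro h2
      have heven := htie 4 h4 (by rw [h2]; norm_num) (by rw [h2]; norm_num)
      rw [h2] at heven
      have hx : expo 0 (2:ℝ) = 1 := by
        rw [expo, if_neg (by norm_num), abs_of_pos (by norm_num), log_two_two]
        norm_num
      rw [hx] at heven
      exact (Int.not_even_iff_odd.mpr ⟨0, by ring⟩) heven
    rcases hcases with h|h|h|h|h|h|h <;> subst h <;>
      first
      | (exfalso; rw [abs_sub_comm, abs_of_nonneg (by norm_num)] at hb; linarith)
      | (exact absurd rfl hne)
      | norm_num
end

section
/- For a signed P3109 format f with P ≥ 2, if σ = 2^i ∈ V_f and x ∈ V_f satisfy |x| ≤ σ/2, |σ + x| ≤ M_hi, and σ + x lies exactly at the midpoint between σ and one of its floating-point neighbors in V_f, then round-to-nearest-ties-to-even applied to σ + x yields σ. -/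
/-- `v` has an even canonical significand in the format. -/
def EvenSig (P : ℕ) (emin : ℤ) (v : ℝ) : Prop :=
  ∃ k : ℤ, Even k ∧ v = (k : ℝ) * (2 : ℝ) ^ (expo emin v - (P : ℤ) + 1)

/-- Round-to-nearest, ties to even (canonical significand parity). -/
def NearestTiesToEven (V : Set ℝ) (P : ℕ) (emin : ℤ) (r s : ℝ) : Prop :=
  Nearest V r s ∧ ∀ v ∈ V, |v - r| = |s - r| → v ≠ s → EvenSig P emin s

private lemma pow2pos (z : ℤ) : (0:ℝ) < (2:ℝ)^z := by positivity

private lemma one_le_pow2 (P : ℕ) : (1:ℝ) ≤ (2:ℝ)^(P:ℤ) := by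
  calc (1:ℝ) = (2:ℝ)^(0:ℤ) := (zpow_zero 2).symm
  _ ≤ _ := zpow_le_zpow_right₀ one_le_two (by positivity)

private lemma zpow_mul_zpow (a b c : ℤ) (h : a = b + c) :
    (2:ℝ)^a = (2:ℝ)^b * (2:ℝ)^c := by
  subst h; exact zpow_add₀ (by norm_num) b c

private lemma cast2pow (t : ℤ) (ht : 0 ≤ t) : (((2:ℤ)^t.toNat : ℤ) : ℝ) = (2:ℝ)^t := by
  push_cast
  rw [← zpow_natCast (2:ℝ), Int.toNat_of_nonneg ht]

private lemma repr_pow (a b : ℤ) (h : b ≤ a) :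
    (2:ℝ)^a = (((2:ℤ)^(a-b).toNat : ℤ) : ℝ) * (2:ℝ)^b := by
  rw [cast2pow _ (by omega), ← zpow_add₀ (by norm_num : (2:ℝ)≠0)]
  congr 1; omega

private lemma repr_add (a b : ℤ) (h : b ≤ a) :
    (2:ℝ)^a + (2:ℝ)^b = (((2:ℤ)^(a-b).toNat + 1 : ℤ) : ℝ) * (2:ℝ)^b := by
  rw [repr_pow a b h]; push_cast; ring

private lemma repr_sub (a b : ℤ) (h : b ≤ a) :
    (2:ℝ)^a - (2:ℝ)^b = (((2:ℤ)^(a-b).toNat - 1 : ℤ) : ℝ) * (2:ℝ)^b := by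
  rw [repr_pow a b h]; push_cast; ring

private lemma grid_step {a b c : ℝ} (hc : 0 < c) {n m : ℤ}
    (ha : a = (n:ℝ)*c) (hb : b = (m:ℝ)*c) (h : a < b) : a + c ≤ b := by
  have hnm : n < m := by
    by_contra hh
    push_neg at hh
    have : (m:ℝ) ≤ (n:ℝ) := by exact_mod_cast hh
    nlinarith
  have : (n:ℝ) + 1 ≤ (m:ℝ) := by exact_mod_cast hnm
  nlinarith

private lemma zmul (m a b : ℤ) (h : b ≤ a) :
    ∃ n : ℤ, (m:ℝ) * (2:ℝ)^a = (n:ℝ) * (2:ℝ)^b := by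
  refine ⟨m * 2^(a-b).toNat, ?_⟩
  push_cast
  rw [← zpow_natCast (2:ℝ) (a-b).toNat, Int.toNat_of_nonneg (by omega), mul_assoc,
    ← zpow_add₀ (by norm_num : (2:ℝ)≠0)]
  congr 2
  omega

private lemma expo_eq_of (emin E : ℤ) (v : ℝ) (hE : emin ≤ E)
    (h1 : (2:ℝ)^E ≤ v) (h2 : v < (2:ℝ)^(E+1)) : expo emin v = E := by
  have hv0 : 0 < v := lt_of_lt_of_le (pow2pos E) h1
  rw [expo, if_neg (ne_of_gt hv0), abs_of_pos hv0]
  have hl : E ≤ Int.log 2 v := by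
    rw [← Int.zpow_le_iff_le_log (by norm_num) hv0]; exact_mod_cast h1
  have hu : Int.log 2 v < E + 1 := by
    rw [← Int.lt_zpow_iff_log_lt (by norm_num) hv0]; exact_mod_cast h2
  omega

private lemma not_evenSig (P : ℕ) (emin : ℤ) (v : ℝ) (E K : ℤ) (hodd : ¬ Even K)
    (hv : v = (K:ℝ) * (2:ℝ)^(E - (P:ℤ) + 1)) (hE : expo emin v = E) :
    ¬ EvenSig P emin v := by
  rintro ⟨k, hk, hkv⟩
  rw [hE] at hkv
  have hc : (k:ℝ) = (K:ℝ) :=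
    mul_right_cancel₀ (ne_of_gt (pow2pos (E-(P:ℤ)+1))) (hkv.symm.trans hv)
  have hkK : k = K := by exact_mod_cast hc
  exact hodd (hkK ▸ hk)

private lemma gap_up (P : ℕ) (emin emax i : ℤ) (hP : 1 ≤ P) (hilb : emin - (P:ℤ) + 1 ≤ i)
    (w : ℝ) (hw : w ∈ Vf P emin emax) (hgt : (2:ℝ)^i < w) :
    (2:ℝ)^i + (2:ℝ)^(max i emin - (P:ℤ) + 1) ≤ w := by
  obtain ⟨m, e, hm, hemin, hemax, heq⟩ := hw
  set E := max i emin with hE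
  have hmR : (m:ℝ) ≤ (2:ℝ)^(P:ℤ) - 1 := by
    have hmz : m ≤ 2^P - 1 := by have := (abs_lt.mp hm).2; omega
    have : (m:ℝ) ≤ (((2:ℤ)^P - 1 : ℤ):ℝ) := by exact_mod_cast hmz
    calc (m:ℝ) ≤ (((2:ℤ)^P - 1 : ℤ):ℝ) := this
    _ = (2:ℝ)^(P:ℤ) - 1 := by push_cast [zpow_natCast]; ring
  rcases le_or_gt E e with hc | hc
  · obtain ⟨n, hn⟩ := zmul m (e - (P:ℤ) + 1) (E - (P:ℤ) + 1) (by omega)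
    exact grid_step (pow2pos (E-(P:ℤ)+1)) (repr_pow i (E-(P:ℤ)+1) (by omega))
      (heq.trans hn) hgt
  · exfalso
    have hEi : E = i := by omega
    have hb : w < (2:ℝ)^i := by
      calc w = (m:ℝ) * (2:ℝ)^(e-(P:ℤ)+1) := heq
      _ ≤ ((2:ℝ)^(P:ℤ) - 1) * (2:ℝ)^(e-(P:ℤ)+1) := by nlinarith [pow2pos (e-(P:ℤ)+1)]
      _ < (2:ℝ)^(P:ℤ) * (2:ℝ)^(e-(P:ℤ)+1) := by nlinarith [pow2pos (e-(P:ℤ)+1)]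
      _ = (2:ℝ)^(e+1) := (zpow_mul_zpow _ _ _ (by omega)).symm
      _ ≤ (2:ℝ)^i := zpow_le_zpow_right₀ one_le_two (by omega)
    linarith

private lemma gap_down (P : ℕ) (emin emax i : ℤ) (hP : 1 ≤ P) (hilb : emin - (P:ℤ) + 1 ≤ i)
    (w : ℝ) (hw : w ∈ Vf P emin emax) (hlt : w < (2:ℝ)^i) :
    w ≤ (2:ℝ)^i - (2:ℝ)^(max (i-1) emin - (P:ℤ) + 1) := by
  obtain ⟨m, e, hm, hemin, hemax, heq⟩ := hw
  set E := max (i-1) emin with hE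
  have hmR : (m:ℝ) ≤ (2:ℝ)^(P:ℤ) - 1 := by
    have hmz : m ≤ 2^P - 1 := by have := (abs_lt.mp hm).2; omega
    have : (m:ℝ) ≤ (((2:ℤ)^P - 1 : ℤ):ℝ) := by exact_mod_cast hmz
    calc (m:ℝ) ≤ (((2:ℤ)^P - 1 : ℤ):ℝ) := this
    _ = (2:ℝ)^(P:ℤ) - 1 := by push_cast [zpow_natCast]; ring
  rcases le_or_gt E e with hc | hc
  · obtain ⟨n, hn⟩ := zmul m (e - (P:ℤ) + 1) (E - (P:ℤ) + 1) (by omega)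
    have := grid_step (pow2pos (E-(P:ℤ)+1)) (heq.trans hn)
      (repr_pow i (E-(P:ℤ)+1) (by omega)) hlt
    linarith
  · have hEi : E = i - 1 := by omega
    have h1 : (2:ℝ)^(e-(P:ℤ)+1) ≤ (2:ℝ)^(E-(P:ℤ)+1) :=
      zpow_le_zpow_right₀ one_le_two (by omega)
    have h2 : (1:ℝ) ≤ (2:ℝ)^(P:ℤ) := one_le_pow2 P
    calc w = (m:ℝ) * (2:ℝ)^(e-(P:ℤ)+1) := heq
    _ ≤ ((2:ℝ)^(P:ℤ) - 1) * (2:ℝ)^(e-(P:ℤ)+1) := by nlinarith [pow2pos (e-(P:ℤ)+1)]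
    _ ≤ ((2:ℝ)^(P:ℤ) - 1) * (2:ℝ)^(E-(P:ℤ)+1) := by nlinarith [pow2pos (E-(P:ℤ)+1)]
    _ = (2:ℝ)^i - (2:ℝ)^(E-(P:ℤ)+1) := by
        rw [sub_mul, one_mul, ← zpow_add₀ (by norm_num : (2:ℝ)≠0)]
        have hx : (P:ℤ) + (E - (P:ℤ) + 1) = i := by omega
        rw [hx]

theorem rne_midpoint_rounds_to_power_of_two
    (P : ℕ) (emin emax : ℤ) (hP : 2 ≤ P) (he : emin ≤ emax)
    (i : ℤ) (σ x : ℝ)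
    (hσ : σ = (2 : ℝ) ^ i) (hσV : σ ∈ Vf P emin emax)
    (hx : x ∈ Vf P emin emax) (hxb : |x| ≤ σ / 2)
    (hbound : |σ + x| ≤ Mhi P emax)
    (hmid : ∃ v ∈ Vf P emin emax,
      ((v < σ ∧ ∀ w ∈ Vf P emin emax, w < σ → w ≤ v) ∨
       (σ < v ∧ ∀ w ∈ Vf P emin emax, σ < w → v ≤ w)) ∧
      σ + x = (σ + v) / 2) :
    ∀ s : ℝ, NearestTiesToEven (Vf P emin emax) P emin (σ + x) s → s = σ := by
  subst hσ
  intro s hs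
  obtain ⟨v, hvV, hnb, hmidv⟩ := hmid
  obtain ⟨⟨hsV, hnear⟩, htie⟩ := hs
  have hP1 : 1 ≤ P := by omega
  have hσV2 := hσV
  obtain ⟨m0, e0, hm0, hem0, hex0, heq0⟩ := hσV2
  have hm0R : (m0:ℝ) < (2:ℝ)^(P:ℤ) := by
    have hmz : m0 < 2^P := lt_of_abs_lt hm0
    have h1 : (m0:ℝ) < (((2:ℤ)^P : ℤ):ℝ) := by exact_mod_cast hmz
    calc (m0:ℝ) < (((2:ℤ)^P : ℤ):ℝ) := h1
    _ = (2:ℝ)^(P:ℤ) := by push_cast [zpow_natCast]; ring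
  have hm0pos : 0 < m0 := by
    by_contra hh
    push_neg at hh
    have h0 : (m0:ℝ) ≤ 0 := by exact_mod_cast hh
    nlinarith [pow2pos i, pow2pos (e0 - (P:ℤ) + 1), heq0]
  have hie : i ≤ e0 := by
    have h1 : (2:ℝ)^i < (2:ℝ)^(e0+1) := by
      calc (2:ℝ)^i = (m0:ℝ) * (2:ℝ)^(e0-(P:ℤ)+1) := heq0
      _ < (2:ℝ)^(P:ℤ) * (2:ℝ)^(e0-(P:ℤ)+1) := by nlinarith [pow2pos (e0-(P:ℤ)+1)]
      _ = (2:ℝ)^(e0+1) := (zpow_mul_zpow _ _ _ (by omega)).symm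
    have := (zpow_lt_zpow_iff_right₀ one_lt_two).mp h1
    omega
  have hiemax : i ≤ emax := hie.trans hex0
  have hilb : emin - (P:ℤ) + 1 ≤ i := by
    have hm1 : (1:ℝ) ≤ (m0:ℝ) := by exact_mod_cast hm0pos
    have h1 : (2:ℝ)^(emin-(P:ℤ)+1) ≤ (2:ℝ)^i := by
      calc (2:ℝ)^(emin-(P:ℤ)+1) ≤ (2:ℝ)^(e0-(P:ℤ)+1) :=
            zpow_le_zpow_right₀ one_le_two (by omega)
      _ ≤ (m0:ℝ) * (2:ℝ)^(e0-(P:ℤ)+1) := by nlinarith [pow2pos (e0-(P:ℤ)+1)]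
      _ = (2:ℝ)^i := heq0.symm
    have := (zpow_le_zpow_iff_right₀ one_lt_two).mp h1
    omega
  have hv2x : v = (2:ℝ)^i + 2*x := by linarith
  have hx0 : x ≠ 0 := by
    rintro rfl
    rcases hnb with ⟨h,_⟩ | ⟨h,_⟩ <;> rw [hv2x] at h <;> linarith
  obtain ⟨mx, ex, hmx, hxemin, hxemax, hxeq⟩ := hx
  obtain ⟨nx, hnx⟩ := zmul mx (ex - (P:ℤ) + 1) (emin - (P:ℤ) + 1) (by omega)
  have hxnx : x = (nx:ℝ) * (2:ℝ)^(emin-(P:ℤ)+1) := hxeq.trans hnx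
  have hnx0 : nx ≠ 0 := by
    rintro rfl
    exact hx0 (by rw [hxnx]; norm_num)
  have hxδ : (2:ℝ)^(emin-(P:ℤ)+1) ≤ |x| := by
    have h1 : (1:ℝ) ≤ |(nx:ℝ)| := by
      have := Int.one_le_abs hnx0
      exact_mod_cast this
    rw [hxnx, abs_mul, abs_of_pos (pow2pos _)]
    nlinarith [pow2pos (emin-(P:ℤ)+1)]
  rcases hnb with ⟨hvlt, hmax⟩ | ⟨hvgt, hmin⟩
  · -- v is the predecessor of 2^i
    set E := max (i-1) emin with hEdef
    have hEemin : emin ≤ E := le_max_right _ _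
    have hpredV : (2:ℝ)^i - (2:ℝ)^(E - (P:ℤ) + 1) ∈ Vf P emin emax := by
      refine ⟨(2:ℤ)^(i - (E - (P:ℤ) + 1)).toNat - 1, E, ?_, hEemin, by omega,
        repr_sub i (E-(P:ℤ)+1) (by omega)⟩
      have h1 : (0:ℤ) < 2^(i - (E - (P:ℤ) + 1)).toNat := by positivity
      have h2 : ((2:ℤ))^(i - (E - (P:ℤ) + 1)).toNat ≤ 2^P :=
        pow_le_pow_right₀ (by norm_num) (by omega)
      have h3 : (0:ℤ) < 2^P := by positivity
      rw [abs_lt]; constructor <;> linarith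
    have hvle := gap_down P emin emax i hP1 hilb v hvV hvlt
    rw [← hEdef] at hvle
    have hvge : (2:ℝ)^i - (2:ℝ)^(E-(P:ℤ)+1) ≤ v :=
      hmax _ hpredV (by linarith [pow2pos (E-(P:ℤ)+1)])
    have hveq : v = (2:ℝ)^i - (2:ℝ)^(E-(P:ℤ)+1) := le_antisymm hvle hvge
    have hD2 : (2:ℝ)^(E-(P:ℤ)+1) = (2:ℝ)^(E-(P:ℤ)) * 2 := by
      rw [zpow_mul_zpow (E-(P:ℤ)+1) (E-(P:ℤ)) 1 (by ring)]; norm_num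
    have hxval : x = -(2:ℝ)^(E-(P:ℤ)) := by
      have h1 : 2*x = -(2:ℝ)^(E-(P:ℤ)+1) := by
        rw [hveq] at hv2x; linarith
      rw [hD2] at h1; linarith
    have hxabs : |x| = (2:ℝ)^(E-(P:ℤ)) := by
      rw [hxval, abs_neg, abs_of_pos (pow2pos _)]
    have hEge : emin + 1 ≤ E := by
      have h1 := hxδ
      rw [hxabs] at h1
      have := (zpow_le_zpow_iff_right₀ one_lt_two).mp h1
      omega
    have hEi : E = i - 1 := by omega
    have hexpo : expo emin v = E := by
      apply expo_eq_of emin E v hEemin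
      · rw [hveq]
        have h1 : (2:ℝ)^(E-(P:ℤ)+1) ≤ (2:ℝ)^E :=
          zpow_le_zpow_right₀ one_le_two (by omega)
        have h2 : (2:ℝ)^i = (2:ℝ)^E * 2 := by
          rw [zpow_mul_zpow i E 1 (by omega)]; norm_num
        linarith [pow2pos E]
      · rw [hveq]
        have h2 : (2:ℝ)^(E+1) = (2:ℝ)^i := by congr 1; omega
        linarith [pow2pos (E-(P:ℤ)+1)]
    have hodd : ¬ Even ((2:ℤ)^(i - (E-(P:ℤ)+1)).toNat - 1) := by
      have hn : (i - (E-(P:ℤ)+1)).toNat ≠ 0 := by omega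
      have he2 : Even ((2:ℤ)^(i - (E-(P:ℤ)+1)).toNat) :=
        (Int.even_pow).mpr ⟨⟨1, by norm_num⟩, hn⟩
      simpa [Int.even_sub_one] using he2
    have hnes : ¬ EvenSig P emin v :=
      not_evenSig P emin v E _ hodd
        (by rw [hveq]; exact repr_sub i (E-(P:ℤ)+1) (by omega)) hexpo
    have h1 : |s - ((2:ℝ)^i + x)| ≤ |x| := by
      have h := hnear _ hσV
      have he' : (2:ℝ)^i - ((2:ℝ)^i + x) = -x := by ring
      rwa [he', abs_neg] at h
    rw [hxabs, abs_le] at h1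
    rw [hxval] at h1
    by_contra hne
    have hsle : s ≤ (2:ℝ)^i := by linarith [h1.2]
    have hslt : s < (2:ℝ)^i := lt_of_le_of_ne hsle hne
    have hsgev : v ≤ s := by
      rw [hveq]
      linarith [h1.1, hD2.le, hD2.ge]
    have hslev : s ≤ v := hmax s hsV hslt
    have hsv : s = v := le_antisymm hslev hsgev
    have hAr : |(2:ℝ)^i - ((2:ℝ)^i + x)| = (2:ℝ)^(E-(P:ℤ)) := by
      have e1 : (2:ℝ)^i - ((2:ℝ)^i + x) = -x := by ring
      rw [e1, abs_neg, hxabs]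
    have hBr : |s - ((2:ℝ)^i + x)| = (2:ℝ)^(E-(P:ℤ)) := by
      have e2 : s - ((2:ℝ)^i + x) = x := by
        rw [hsv, hveq, hxval, hD2]; ring
      rw [e2, hxabs]
    have hEvs := htie _ hσV (hAr.trans hBr.symm)
      (by rw [hsv]; exact ne_of_gt hvlt)
    rw [hsv] at hEvs
    exact absurd hEvs hnes
  · -- v is the successor of 2^i
    set E := max i emin with hEdef
    have hEemin : emin ≤ E := le_max_right _ _
    have hsuccV : (2:ℝ)^i + (2:ℝ)^(E - (P:ℤ) + 1) ∈ Vf P emin emax := by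
      refine ⟨(2:ℤ)^(i - (E - (P:ℤ) + 1)).toNat + 1, E, ?_, hEemin, by omega,
        repr_add i (E-(P:ℤ)+1) (by omega)⟩
      have h1 : (0:ℤ) < 2^(i - (E - (P:ℤ) + 1)).toNat := by positivity
      have h2 : ((2:ℤ))^(i - (E - (P:ℤ) + 1)).toNat ≤ 2^(P-1) :=
        pow_le_pow_right₀ (by norm_num) (by omega)
      have h4 : (2:ℤ)^(P-1) * 2 = 2^P := by
        rw [← pow_succ]; congr 1; omega
      have h5 : (2:ℤ) ≤ 2^(P-1) := by
        calc (2:ℤ) = 2^1 := (pow_one 2).symm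
        _ ≤ 2^(P-1) := pow_le_pow_right₀ (by norm_num) (by omega)
      rw [abs_lt]; constructor <;> linarith
    have hvge := gap_up P emin emax i hP1 hilb v hvV hvgt
    rw [← hEdef] at hvge
    have hvle : v ≤ (2:ℝ)^i + (2:ℝ)^(E-(P:ℤ)+1) :=
      hmin _ hsuccV (by linarith [pow2pos (E-(P:ℤ)+1)])
    have hveq : v = (2:ℝ)^i + (2:ℝ)^(E-(P:ℤ)+1) := le_antisymm hvle hvge
    have hD2 : (2:ℝ)^(E-(P:ℤ)+1) = (2:ℝ)^(E-(P:ℤ)) * 2 := by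
      rw [zpow_mul_zpow (E-(P:ℤ)+1) (E-(P:ℤ)) 1 (by ring)]; norm_num
    have hxval : x = (2:ℝ)^(E-(P:ℤ)) := by
      have h1 : 2*x = (2:ℝ)^(E-(P:ℤ)+1) := by
        rw [hveq] at hv2x; linarith
      rw [hD2] at h1; linarith
    have hxabs : |x| = (2:ℝ)^(E-(P:ℤ)) := by
      rw [hxval, abs_of_pos (pow2pos _)]
    have hEge : emin + 1 ≤ E := by
      have h1 := hxδ
      rw [hxabs] at h1
      have := (zpow_le_zpow_iff_right₀ one_lt_two).mp h1
      omega
    have hEi : E = i := by omega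
    have hexpo : expo emin v = E := by
      apply expo_eq_of emin E v hEemin
      · rw [hveq]
        have h2 : (2:ℝ)^E = (2:ℝ)^i := by congr 1
        linarith [pow2pos (E-(P:ℤ)+1)]
      · rw [hveq]
        have h2 : (2:ℝ)^(E+1) = (2:ℝ)^i * 2 := by
          rw [zpow_mul_zpow (E+1) i 1 (by omega)]; norm_num
        have h3 : (2:ℝ)^(E-(P:ℤ)+1) < (2:ℝ)^i :=
          zpow_lt_zpow_right₀ one_lt_two (by omega)
        linarith
    have hodd : ¬ Even ((2:ℤ)^(i - (E-(P:ℤ)+1)).toNat + 1) := by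
      have hn : (i - (E-(P:ℤ)+1)).toNat ≠ 0 := by omega
      have he2 : Even ((2:ℤ)^(i - (E-(P:ℤ)+1)).toNat) :=
        (Int.even_pow).mpr ⟨⟨1, by norm_num⟩, hn⟩
      simpa [Int.even_add_one] using he2
    have hnes : ¬ EvenSig P emin v :=
      not_evenSig P emin v E _ hodd
        (by rw [hveq]; exact repr_add i (E-(P:ℤ)+1) (by omega)) hexpo
    have h1 : |s - ((2:ℝ)^i + x)| ≤ |x| := by
      have h := hnear _ hσV
      have he' : (2:ℝ)^i - ((2:ℝ)^i + x) = -x := by ring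
      rwa [he', abs_neg] at h
    rw [hxabs, abs_le] at h1
    rw [hxval] at h1
    by_contra hne
    have hsge : (2:ℝ)^i ≤ s := by linarith [h1.1]
    have hsgt : (2:ℝ)^i < s := lt_of_le_of_ne hsge (Ne.symm hne)
    have hslev : s ≤ v := by
      rw [hveq]
      linarith [h1.2, hD2.le, hD2.ge]
    have hsgev : v ≤ s := hmin s hsV hsgt
    have hsv : s = v := le_antisymm hslev hsgev
    have hAr : |(2:ℝ)^i - ((2:ℝ)^i + x)| = (2:ℝ)^(E-(P:ℤ)) := by
      have e1 : (2:ℝ)^i - ((2:ℝ)^i + x) = -x := by ring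
      rw [e1, abs_neg, hxabs]
    have hBr : |s - ((2:ℝ)^i + x)| = (2:ℝ)^(E-(P:ℤ)) := by
      have e2 : s - ((2:ℝ)^i + x) = x := by
        rw [hsv, hveq, hxval, hD2]; ring
      rw [e2, hxabs]
    have hEvs := htie _ hσV (hAr.trans hBr.symm)
      (by rw [hsv]; exact ne_of_lt hvgt)
    rw [hsv] at hEvs
    exact absurd hEvs hnes
end

section
/- For a signed P3109 format f with P ≥ 1, if r ∈ ℝ satisfies 2^emin ≤ |r| and |r| ≤ M_hi, and s is a round-to-nearest value of r in V_f, then |r − s| ≤ 2^(exponent(r) − P); i.e., the round-to-nearest error is at most half an ulp of r. -/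
theorem nearest_half_ulp_bound
    (P : ℕ) (emin emax : ℤ) (hP : 1 ≤ P) (he : emin ≤ emax)
    (r s : ℝ) (hlo : (2 : ℝ) ^ emin ≤ |r|) (hhi : |r| ≤ Mhi P emax)
    (hs : Nearest (Vf P emin emax) r s) :
    |r - s| ≤ (2 : ℝ) ^ (Int.log 2 |r| - (P : ℤ)) := by
  have hr0 : (0:ℝ) < |r| := lt_of_lt_of_le (zpow_pos two_pos emin) hlo
  set E := Int.log 2 |r| with hEdef
  have hlog_le : (2:ℝ) ^ E ≤ |r| := Int.zpow_log_le_self one_lt_two hr0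
  have hlog_lt : |r| < (2:ℝ) ^ (E + 1) := Int.lt_zpow_succ_log_self one_lt_two |r|
  have hpowmerge : ∀ a b : ℤ, (2:ℝ) ^ a * (2:ℝ) ^ b = (2:ℝ) ^ (a + b) := by
    intro a b; rw [← zpow_add₀ (two_ne_zero)]
  have hcastP : ((2:ℝ) ^ P) = (2:ℝ) ^ (P:ℤ) := (zpow_natCast 2 P).symm
  have hMhi_lt : Mhi P emax < (2:ℝ) ^ (emax + 1) := by
    unfold Mhi
    have h1 : ((2:ℝ)^P - 1) < 2^P := by linarith
    calc ((2:ℝ)^P - 1) * 2^(emax - P + 1)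
        < 2^P * 2^(emax - (P:ℤ) + 1) :=
          mul_lt_mul_of_pos_right h1 (zpow_pos two_pos _)
      _ = 2^(emax+1) := by rw [hcastP, hpowmerge]; ring_nf
  have hEmax : E ≤ emax := by
    by_contra h
    push_neg at h
    have h1 : (2:ℝ) ^ (emax + 1) ≤ (2:ℝ) ^ E :=
      zpow_le_zpow_right₀ one_le_two (by omega)
    linarith
  have hEmin : emin ≤ E := by
    by_contra h
    push_neg at h
    have h1 : (2:ℝ) ^ (E + 1) ≤ (2:ℝ) ^ emin :=
      zpow_le_zpow_right₀ one_le_two (by omega)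
    linarith
  set d : ℝ := (2:ℝ) ^ (E - P + 1) with hddef
  have hd0 : (0:ℝ) < d := zpow_pos two_pos _
  set q : ℝ := r / d with hqdef
  have hrq : r = q * d := (div_mul_cancel₀ r hd0.ne').symm
  set m : ℤ := round q with hmdef
  have hround : |(m:ℝ) - q| ≤ 1/2 := by
    rw [abs_sub_comm]; exact abs_sub_round q
  have hqabs : |q| = |r| / d := by rw [hqdef, abs_div, abs_of_pos hd0]
  have hhalf : (1/2) * d = (2:ℝ) ^ (E - (P:ℤ)) := by
    rw [hddef, show E - (P:ℤ) + 1 = (E - (P:ℤ)) + 1 by ring,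
      ← hpowmerge (E - (P:ℤ)) 1]
    norm_num; ring
  have herr : |r - (m:ℝ) * d| ≤ (2:ℝ) ^ (E - (P:ℤ)) := by
    have : r - (m:ℝ) * d = (q - m) * d := by rw [hrq]; ring
    rw [this, abs_mul, abs_of_pos hd0, abs_sub_comm]
    calc |(m:ℝ) - q| * d ≤ (1/2) * d :=
        mul_le_mul_of_nonneg_right hround hd0.le
      _ = (2:ℝ) ^ (E - (P:ℤ)) := hhalf
  -- bound on |m|
  have hmle : |m| ≤ 2 ^ P ∧ (E = emax → |m| < 2 ^ P) := by
    constructor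
    · have hq : |q| < 2 ^ P := by
        rw [hqabs, div_lt_iff₀ hd0, hcastP, hddef, hpowmerge]
        calc |r| < (2:ℝ) ^ (E + 1) := hlog_lt
          _ = (2:ℝ) ^ ((P:ℤ) + (E - (P:ℤ) + 1)) := by ring_nf
      have : |(m:ℝ)| ≤ |q| + 1/2 := by
        calc |(m:ℝ)| ≤ |q| + |(m:ℝ) - q| := by
              have := abs_add_le q ((m:ℝ) - q); simpa using this
          _ ≤ |q| + 1/2 := by linarith
      have h2 : |(m:ℝ)| < 2 ^ P + 1/2 := by linarith
      have h3 : (|m| : ℝ) < ((2 ^ P : ℤ) : ℝ) + 1/2 := by push_cast; exact h2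
      have h4 : (|m| : ℝ) < ((2 ^ P + 1 : ℤ) : ℝ) := by push_cast; linarith
      have h5 : |m| < 2 ^ P + 1 := by exact_mod_cast h4
      omega
    · intro hEe
      have hq : |q| ≤ 2 ^ P - 1 := by
        rw [hqabs, div_le_iff₀ hd0]
        calc |r| ≤ Mhi P emax := hhi
          _ = ((2:ℝ)^P - 1) * d := by rw [Mhi, hddef, hEe]
      have : |(m:ℝ)| ≤ |q| + 1/2 := by
        calc |(m:ℝ)| ≤ |q| + |(m:ℝ) - q| := by
              have := abs_add_le q ((m:ℝ) - q); simpa using this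
          _ ≤ |q| + 1/2 := by linarith
      have h2 : (|m| : ℝ) < ((2 ^ P : ℤ) : ℝ) := by push_cast; linarith
      exact_mod_cast h2
  have hv : (m:ℝ) * d ∈ Vf P emin emax := by
    rcases lt_or_eq_of_le hmle.1 with hlt | heq
    · exact ⟨m, E, hlt, hEmin, hEmax, by rw [hddef]⟩
    · have hElt : E < emax := by
        rcases lt_or_eq_of_le hEmax with h | h
        · exact h
        · exact absurd heq (ne_of_lt (hmle.2 h))
      have hPm1 : (2:ℤ) ^ (P - 1) < 2 ^ P := by
        apply pow_lt_pow_right₀ one_lt_two; omega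
      have habs : |(2:ℤ) ^ (P-1)| < 2 ^ P := by
        rwa [abs_of_nonneg (by positivity)]
      have hdd : (2:ℝ) ^ ((P:ℤ) - 1) * (2:ℝ) ^ (E + 1 - (P:ℤ) + 1)
          = (2:ℝ) ^ (P:ℤ) * d := by
        rw [hddef, hpowmerge, hpowmerge]; ring_nf
      have hcast1 : (((2:ℤ) ^ (P-1) : ℤ) : ℝ) = (2:ℝ) ^ ((P:ℤ) - 1) := by
        push_cast
        rw [← zpow_natCast (2:ℝ) (P-1)]
        congr 1
        omega
      have hcast2 : (2:ℝ) ^ (P-1) = (2:ℝ) ^ ((P:ℤ)-1) := by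
        rw [← zpow_natCast]; congr 1; omega
      rcases abs_eq (by positivity : (0:ℤ) ≤ 2 ^ P) |>.mp heq with hm | hm
      · refine ⟨2 ^ (P-1), E + 1, habs, by omega, by omega, ?_⟩
        rw [hm]
        push_cast
        rw [hcastP, hcast2]
        linear_combination -hdd
      · refine ⟨-(2 ^ (P-1)), E + 1, by rwa [abs_neg], by omega, by omega, ?_⟩
        rw [hm]
        push_cast
        rw [hcastP, hcast2]
        linear_combination hdd
  have := hs.2 _ hv
  calc |r - s| = |s - r| := abs_sub_comm r s
    _ ≤ |(m:ℝ) * d - r| := this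
    _ = |r - (m:ℝ) * d| := abs_sub_comm _ r
    _ ≤ (2:ℝ) ^ (E - (P:ℤ)) := herr
end
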